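/- arXiv:1709.02168 — 3 statements merged into one kernel-verified Lean document; each statement's English description precedes it below -/
import Mathlib

section
/- For every rate R > C_Wyner(X;Y) there exist a sequence of synthesis codes of rate R and a constant c > 0 such that the total variation distance satisfies |P_{X^nY^n} − π_{X^nY^n}| ≤ e^{−cn} for all sufficiently large n; i.e., the total variation distance between the synthesized and target distributions can be made to vanish exponentially fast above Wyner's common information. -/
open Filter

noncomputable section

/-- `P` is a probability mass function on the finite type `α`. -/
def IsPMF {α : Type*} [Fintype α] (P : α → ℝ) : Prop :=
  (∀ a, 0 ≤ P a) ∧ (∑ a, P a) = 1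

/-- Rényi divergence of order `1 + s` (natural logarithm), `EReal`-valued.
For `s ≥ 0` it is `⊤` when `supp P ⊄ supp Q`; for `s = 0` it is the relative
entropy; otherwise it is `(1/s) log ∑_{x ∈ supp P} P(x)^{1+s} Q(x)^{-s}`. -/
def renyiDiv {α : Type*} [Fintype α] (s : ℝ) (P Q : α → ℝ) : EReal :=
  if 0 ≤ s ∧ ∃ a, 0 < P a ∧ Q a = 0 then ⊤
  else if s = 0 then
    (((∑ a ∈ Finset.univ.filter (fun a => 0 < P a), P a * Real.log (P a / Q a)) : ℝ) : EReal)
  else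
    ((((1 / s) * Real.log (∑ a ∈ Finset.univ.filter (fun a => 0 < P a),
        P a ^ (1 + s) * Q a ^ (-s))) : ℝ) : EReal)

/-- Mutual information `I(XY; W)` of a joint distribution on `(X × Y) × W`. -/
def mutualInfoW {X Y W : Type*} [Fintype X] [Fintype Y] [Fintype W] (P : X × Y × W → ℝ) : ℝ :=
  ∑ z ∈ Finset.univ.filter (fun z : X × Y × W => 0 < P z),
    P z * Real.log (P z /
      ((∑ w, P (z.1, z.2.1, w)) * (∑ p : X × Y, P (p.1, p.2, z.2.2))))

/-- The Markov chain condition `X − W − Y`. -/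
def IsMarkovXWY {X Y W : Type*} [Fintype X] [Fintype Y] [Fintype W] (P : X × Y × W → ℝ) : Prop :=
  ∀ x y w, P (x, y, w) * (∑ p : X × Y, P (p.1, p.2, w)) =
    (∑ y', P (x, y', w)) * (∑ x', P (x', y, w))

/-- Wyner's common information of the target distribution `π` on `X × Y`. -/
def CWyner {X Y : Type*} [Fintype X] [Fintype Y] (π : X × Y → ℝ) : ℝ :=
  sInf { r | ∃ P : X × Y × Fin (Fintype.card X * Fintype.card Y) → ℝ,
    IsPMF P ∧ (∀ x y, (∑ w, P (x, y, w)) = π (x, y)) ∧ IsMarkovXWY P ∧ r = mutualInfoW P }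

/-- The message set size `⌈e^{nR}⌉` of a rate-`R` synthesis code at blocklength `n`. -/
def numMsgs (R : ℝ) (n : ℕ) : ℕ := ⌈Real.exp (n * R)⌉₊

/-- A synthesis code: a pair of conditional distributions from the message set to
`X^n` and `Y^n` respectively. -/
structure SynthCode (X Y : Type*) [Fintype X] [Fintype Y] (M n : ℕ) where
  PX : Fin M → (Fin n → X) → ℝ
  PY : Fin M → (Fin n → Y) → ℝ
  PX_pmf : ∀ m, IsPMF (PX m)
  PY_pmf : ∀ m, IsPMF (PY m)

/-- The distribution `P_{X^n Y^n}` induced by a synthesis code. -/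
def SynthCode.induced {X Y : Type*} [Fintype X] [Fintype Y] {M n : ℕ}
    (c : SynthCode X Y M n) : (Fin n → X) × (Fin n → Y) → ℝ :=
  fun z => (M : ℝ)⁻¹ * ∑ m, c.PX m z.1 * c.PY m z.2

/-- The `n`-fold product distribution `π^{⊗ n}` on `X^n × Y^n`. -/
def prodDist {X Y : Type*} [Fintype X] [Fintype Y] (π : X × Y → ℝ) (n : ℕ) :
    (Fin n → X) × (Fin n → Y) → ℝ :=
  fun z => ∏ i, π (z.1 i, z.2 i)

/-- Total variation distance between two distributions on a finite type. -/
def tvDist {α : Type*} [Fintype α] (P Q : α → ℝ) : ℝ :=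
  (∑ a, |P a - Q a|) / 2

/-!
Fix a Wyner decomposition `π(x, y) = ∑_w pW(w) gX(x | w) gY(y | w)` with `I(XY; W) < t < R`,
draw the `M = ⌈e^{nR}⌉` codewords i.i.d. from `pW^{⊗n}`, and send message `m` through `gX^{⊗n}` and
`gY^{⊗n}` from codeword `m`. Cut the likelihood `G(v, z)` of each codeword at `T π^{⊗n}(z)` with
`T = e^{nt}`. Below the cut the codebook average has variance at most `T π^{⊗n}(z)² / M`, which by
Cauchy–Schwarz costs `√(T / M) / 2 ≤ e^{-n(R-t)/2}` in total variation. Above it, Markov's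
inequality with exponent `s` gives `T^{-s} Λ(s)^n`, where `Λ(s) = ∑ P^{1+s} (π ⊗ pW)^{-s}` is the
Rényi sum of order `1 + s`. As `Λ(0) = 1` and `Λ'(0) = I(XY; W) < t`, some `s > 0` has
`Λ(s) < e^{st}`, so both terms decay exponentially; some codebook is as good as the average one.
-/

section WeightedAverage

variable {ι : Type*} [Fintype ι] {μ : ι → ℝ}

lemma exists_le_sum_mul (hμ0 : ∀ i, 0 ≤ μ i) (hμ1 : ∑ i, μ i = 1) (f : ι → ℝ) :
    ∃ i, f i ≤ ∑ j, μ j * f j := by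
  have : Nonempty ι := by
    by_contra h
    simp [not_nonempty_iff.mp h] at hμ1
  obtain ⟨i, hi⟩ := Finite.exists_min f
  refine ⟨i, ?_⟩
  calc f i = ∑ j, μ j * f i := by rw [← Finset.sum_mul, hμ1, one_mul]
    _ ≤ ∑ j, μ j * f j := Finset.sum_le_sum fun j _ => mul_le_mul_of_nonneg_left (hi j) (hμ0 j)

lemma sum_mul_abs_le_sqrt_sum_mul_sq (hμ0 : ∀ i, 0 ≤ μ i) (hμ1 : ∑ i, μ i = 1) (u : ι → ℝ) :
    ∑ i, μ i * |u i| ≤ √(∑ i, μ i * u i ^ 2) := by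
  refine Real.le_sqrt_of_sq_le ?_
  simpa only [sq_abs] using Real.pow_arith_mean_le_arith_mean_pow Finset.univ μ (|u ·|)
    (fun i _ => hμ0 i) hμ1 (fun i _ => abs_nonneg (u i)) 2

end WeightedAverage

section RandomCodebook

variable {ι V : Type*} [Fintype ι] [DecidableEq ι] [Fintype V] {μ : V → ℝ}

lemma sum_prod_mul_prod (F : ι → V → ℝ) :
    ∑ C : ι → V, (∏ k, μ (C k)) * ∏ k, F k (C k) = ∏ k, ∑ v, μ v * F k v := by
  simp_rw [← Finset.prod_mul_distrib]
  exact (Fintype.prod_sum fun k v => μ v * F k v).symm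

lemma sum_prod_mul_apply (hμ1 : ∑ v, μ v = 1) (i : ι) (F : V → ℝ) :
    ∑ C : ι → V, (∏ k, μ (C k)) * F (C i) = ∑ v, μ v * F v := by
  simpa [apply_ite, hμ1] using sum_prod_mul_prod (μ := μ) fun k v => if k = i then F v else 1

lemma sum_prod_mul_apply_mul_apply (hμ1 : ∑ v, μ v = 1) {i j : ι} (hij : i ≠ j)
    (F G : V → ℝ) :
    ∑ C : ι → V, (∏ k, μ (C k)) * (F (C i) * G (C j)) = (∑ v, μ v * F v) * ∑ v, μ v * G v := by
  have hprod (C : ι → V) : F (C i) * G (C j) =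
      ∏ k, if k = i then F (C k) else if k = j then G (C k) else 1 := by
    rw [Fintype.prod_eq_mul i j hij fun k hk => by simp [hk.1, hk.2]]
    simp [hij.symm]
  simp_rw [hprod]
  rw [sum_prod_mul_prod fun k v => if k = i then F v else if k = j then G v else 1,
    Fintype.prod_eq_mul i j hij fun k hk => by simp [hk.1, hk.2, hμ1]]
  simp [hij.symm]

lemma sum_prod_eq_one (hμ1 : ∑ v, μ v = 1) : ∑ C : ι → V, ∏ k, μ (C k) = 1 := by
  rw [← Fintype.prod_sum fun _ => μ]
  simp [hμ1]

lemma sum_prod_mul_sum_apply_sq (hμ1 : ∑ v, μ v = 1) (F : V → ℝ) (hF : ∑ v, μ v * F v = 0) :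
    ∑ C : ι → V, (∏ k, μ (C k)) * (∑ i, F (C i)) ^ 2 = Fintype.card ι * ∑ v, μ v * F v ^ 2 := by
  have hpair (i j : ι) : ∑ C : ι → V, (∏ k, μ (C k)) * (F (C i) * F (C j)) =
      if i = j then ∑ v, μ v * F v ^ 2 else 0 := by
    split_ifs with hij
    · subst hij
      simpa [sq] using sum_prod_mul_apply hμ1 i fun v => F v * F v
    · rw [sum_prod_mul_apply_mul_apply hμ1 hij, hF, zero_mul]
  calc ∑ C : ι → V, (∏ k, μ (C k)) * (∑ i, F (C i)) ^ 2
      = ∑ i, ∑ j, ∑ C : ι → V, (∏ k, μ (C k)) * (F (C i) * F (C j)) := by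
        simp_rw [sq, Finset.sum_mul_sum, Finset.mul_sum]
        rw [Finset.sum_comm]
        exact Finset.sum_congr rfl fun i _ => Finset.sum_comm
    _ = Fintype.card ι * ∑ v, μ v * F v ^ 2 := by simp [hpair]

variable [Nonempty ι]

lemma sum_prod_mul_avg (hμ1 : ∑ v, μ v = 1) (F : V → ℝ) :
    ∑ C : ι → V, (∏ k, μ (C k)) * ((Fintype.card ι : ℝ)⁻¹ * ∑ i, F (C i)) = ∑ v, μ v * F v := by
  simp_rw [Finset.mul_sum, mul_left_comm _ (Fintype.card ι : ℝ)⁻¹]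
  rw [Finset.sum_comm]
  simp_rw [← Finset.mul_sum, sum_prod_mul_apply hμ1]
  simp

lemma sum_prod_mul_abs_avg_sub_le (hμ0 : ∀ v, 0 ≤ μ v) (hμ1 : ∑ v, μ v = 1) (F : V → ℝ) :
    ∑ C : ι → V, (∏ k, μ (C k)) * |(Fintype.card ι : ℝ)⁻¹ * ∑ i, F (C i) - ∑ v, μ v * F v| ≤
      √((∑ v, μ v * F v ^ 2) / Fintype.card ι) := by
  set m := ∑ v, μ v * F v
  have hN : 0 < (Fintype.card ι : ℝ) := Nat.cast_pos.mpr Fintype.card_pos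
  have hcentered : ∑ v, μ v * (F v - m) = 0 := by
    simp [mul_sub, Finset.sum_sub_distrib, ← Finset.sum_mul, hμ1, m]
  have hvar : ∑ v, μ v * (F v - m) ^ 2 ≤ ∑ v, μ v * F v ^ 2 := by
    calc ∑ v, μ v * (F v - m) ^ 2 = ∑ v, (μ v * F v ^ 2 - 2 * m * (μ v * F v) + m ^ 2 * μ v) :=
          Finset.sum_congr rfl fun v _ => by ring
      _ = ∑ v, μ v * F v ^ 2 - m ^ 2 := by
          rw [Finset.sum_add_distrib, Finset.sum_sub_distrib, ← Finset.mul_sum, ← Finset.mul_sum,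
            hμ1]
          ring
      _ ≤ ∑ v, μ v * F v ^ 2 := sub_le_self _ (sq_nonneg m)
  have hdev (C : ι → V) :
      (Fintype.card ι : ℝ)⁻¹ * ∑ i, F (C i) - m = (Fintype.card ι : ℝ)⁻¹ * ∑ i, (F (C i) - m) := by
    rw [Finset.sum_sub_distrib, Finset.sum_const, Finset.card_univ, nsmul_eq_mul, mul_sub,
      inv_mul_cancel_left₀ hN.ne']
  calc ∑ C : ι → V, (∏ k, μ (C k)) * |(Fintype.card ι : ℝ)⁻¹ * ∑ i, F (C i) - m|
      ≤ √(∑ C : ι → V, (∏ k, μ (C k)) * ((Fintype.card ι : ℝ)⁻¹ * ∑ i, (F (C i) - m)) ^ 2) := by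
        simp_rw [hdev]
        exact sum_mul_abs_le_sqrt_sum_mul_sq (fun C => Finset.prod_nonneg fun k _ => hμ0 _)
          (sum_prod_eq_one hμ1) _
    _ = √((∑ v, μ v * (F v - m) ^ 2) / Fintype.card ι) := by
        simp_rw [mul_pow, mul_left_comm _ ((Fintype.card ι : ℝ)⁻¹ ^ 2)]
        rw [← Finset.mul_sum, sum_prod_mul_sum_apply_sq hμ1 _ hcentered]
        congr 1
        field_simp
    _ ≤ √((∑ v, μ v * F v ^ 2) / Fintype.card ι) := by gcongr

-- Below the cut `c` the second moment is at most `c · E g`; above it only the mean is used.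
lemma sum_prod_mul_abs_avg_sub_le_of_truncation (hμ0 : ∀ v, 0 ≤ μ v) (hμ1 : ∑ v, μ v = 1)
    {g : V → ℝ} (hg : ∀ v, 0 ≤ g v) {c : ℝ} (hc : 0 ≤ c) :
    ∑ C : ι → V, (∏ k, μ (C k)) * |(Fintype.card ι : ℝ)⁻¹ * ∑ i, g (C i) - ∑ v, μ v * g v| ≤
      √(c * (∑ v, μ v * g v) / Fintype.card ι) +
        2 * ∑ v, μ v * (if c < g v then g v else 0) := by
  set N : ℝ := (Fintype.card ι : ℝ)
  set A : V → ℝ := fun v => if c < g v then 0 else g v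
  set B : V → ℝ := fun v => if c < g v then g v else 0
  have hA0 (v : V) : 0 ≤ A v := by simp only [A]; split_ifs <;> simp [hg v]
  have hB0 (v : V) : 0 ≤ B v := by simp only [B]; split_ifs <;> simp [hg v]
  have hAB (v : V) : g v = A v + B v := by simp only [A, B]; split_ifs <;> ring
  have hAsq (v : V) : A v ^ 2 ≤ c * g v := by
    simp only [A]
    split_ifs with h
    · simpa using mul_nonneg hc (hg v)
    · rw [sq]; exact mul_le_mul_of_nonneg_right (not_lt.mp h) (hg v)
  have hsplit (C : ι → V) : |N⁻¹ * ∑ i, g (C i) - ∑ v, μ v * g v| ≤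
      |N⁻¹ * ∑ i, A (C i) - ∑ v, μ v * A v| + (N⁻¹ * ∑ i, B (C i) + ∑ v, μ v * B v) := by
    have hB : 0 ≤ N⁻¹ * ∑ i, B (C i) :=
      mul_nonneg (inv_nonneg.mpr (Nat.cast_nonneg _)) (Finset.sum_nonneg fun i _ => hB0 _)
    have hEB : 0 ≤ ∑ v, μ v * B v := Finset.sum_nonneg fun v _ => mul_nonneg (hμ0 v) (hB0 v)
    have : N⁻¹ * ∑ i, g (C i) - ∑ v, μ v * g v = (N⁻¹ * ∑ i, A (C i) - ∑ v, μ v * A v) +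
        (N⁻¹ * ∑ i, B (C i) - ∑ v, μ v * B v) := by
      simp only [hAB, Finset.sum_add_distrib, mul_add]
      ring
    rw [this]
    exact (abs_add_le _ _).trans (add_le_add_right (abs_sub _ _ |>.trans (by
      rw [abs_of_nonneg hB, abs_of_nonneg hEB])) _)
  calc ∑ C : ι → V, (∏ k, μ (C k)) * |N⁻¹ * ∑ i, g (C i) - ∑ v, μ v * g v|
      ≤ ∑ C : ι → V, (∏ k, μ (C k)) * (|N⁻¹ * ∑ i, A (C i) - ∑ v, μ v * A v| +
          (N⁻¹ * ∑ i, B (C i) + ∑ v, μ v * B v)) :=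
        Finset.sum_le_sum fun C _ =>
          mul_le_mul_of_nonneg_left (hsplit C) (Finset.prod_nonneg fun k _ => hμ0 _)
    _ = ∑ C : ι → V, (∏ k, μ (C k)) * |N⁻¹ * ∑ i, A (C i) - ∑ v, μ v * A v| +
          2 * ∑ v, μ v * B v := by
        rw [Finset.sum_congr rfl fun C _ => mul_add _ _ _, Finset.sum_add_distrib,
          Finset.sum_congr rfl fun C _ => mul_add _ _ _, Finset.sum_add_distrib,
          sum_prod_mul_avg hμ1, ← Finset.sum_mul, sum_prod_eq_one hμ1]
        ring
    _ ≤ √(c * (∑ v, μ v * g v) / N) + 2 * ∑ v, μ v * B v := by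
        gcongr
        refine (sum_prod_mul_abs_avg_sub_le hμ0 hμ1 A).trans ?_
        gcongr
        rw [Finset.mul_sum]
        exact Finset.sum_le_sum fun v _ => by nlinarith [hAsq v, hμ0 v]

theorem exists_sum_abs_avg_sub_le {Z : Type*} [Fintype Z] (hμ0 : ∀ v, 0 ≤ μ v)
    (hμ1 : ∑ v, μ v = 1) {G : V → Z → ℝ} (hG : ∀ v z, 0 ≤ G v z) {c : Z → ℝ}
    (hc : ∀ z, 0 ≤ c z) :
    ∃ C : ι → V, ∑ z, |(Fintype.card ι : ℝ)⁻¹ * ∑ i, G (C i) z - ∑ v, μ v * G v z| ≤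
      ∑ z, (√(c z * (∑ v, μ v * G v z) / Fintype.card ι) +
        2 * ∑ v, μ v * (if c z < G v z then G v z else 0)) := by
  obtain ⟨C, hC⟩ := exists_le_sum_mul (fun C : ι → V => Finset.prod_nonneg fun k _ => hμ0 (C k))
    (sum_prod_eq_one hμ1)
    (fun C => ∑ z, |(Fintype.card ι : ℝ)⁻¹ * ∑ i, G (C i) z - ∑ v, μ v * G v z|)
  refine ⟨C, hC.trans (le_of_eq_of_le
    ((Finset.sum_congr rfl fun C _ => Finset.mul_sum _ _ _).trans Finset.sum_comm)
    (Finset.sum_le_sum fun z _ =>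
      sum_prod_mul_abs_avg_sub_le_of_truncation hμ0 hμ1 (fun v => hG v z) (hc z)))⟩

end RandomCodebook

section Tail

lemma ite_lt_le_rpow_neg_mul_rpow {c g s : ℝ} (hc : 0 < c) (hg : 0 ≤ g) (hs : 0 ≤ s) :
    (if c < g then g else 0) ≤ c ^ (-s) * g ^ (1 + s) := by
  split_ifs with h
  · have hg' : 0 < g := hc.trans h
    calc g = g * 1 := (mul_one g).symm
      _ ≤ g * (g / c) ^ s := mul_le_mul_of_nonneg_left
          (Real.one_le_rpow ((one_le_div hc).mpr h.le) hs) hg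
      _ = c ^ (-s) * g ^ (1 + s) := by
          rw [Real.div_rpow hg hc.le, Real.rpow_neg hc.le, Real.rpow_add hg', Real.rpow_one]
          ring
  · positivity

lemma sum_mul_ite_lt_le {V : Type*} [Fintype V] {μ g : V → ℝ} (hμ : ∀ v, 0 ≤ μ v)
    (hg : ∀ v, 0 ≤ g v) {T s : ℝ} (hT : 0 < T) (hs : 0 ≤ s) :
    ∑ v, μ v * (if T * ∑ v', μ v' * g v' < g v then g v else 0) ≤
      (T * ∑ v, μ v * g v) ^ (-s) * ∑ v, μ v * g v ^ (1 + s) := by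
  rcases (Finset.sum_nonneg fun v _ => mul_nonneg (hμ v) (hg v)).eq_or_lt with ha | ha
  · have hzero (v : V) : μ v * g v = 0 :=
      (Finset.sum_eq_zero_iff_of_nonneg fun v _ => mul_nonneg (hμ v) (hg v)).mp ha.symm v
        (Finset.mem_univ v)
    have hlhs : ∑ v, μ v * (if T * ∑ v', μ v' * g v' < g v then g v else 0) = 0 :=
      Finset.sum_eq_zero fun v _ => by split_ifs <;> simp [hzero v]
    rw [hlhs]
    exact mul_nonneg (Real.rpow_nonneg (by rw [← ha]; simp) _)
      (Finset.sum_nonneg fun v _ => mul_nonneg (hμ v) (Real.rpow_nonneg (hg v) _))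
  · refine (Finset.sum_le_sum fun v _ => ?_).trans_eq (Finset.mul_sum _ _ _).symm
    rw [mul_left_comm]
    exact mul_le_mul_of_nonneg_left (ite_lt_le_rpow_neg_mul_rpow (mul_pos hT ha) (hg v) hs) (hμ v)

end Tail

lemma IsPMF.pi {ι α : Type*} [Fintype ι] [DecidableEq ι] [Fintype α] {p : ι → α → ℝ}
    (hp : ∀ i, IsPMF (p i)) : IsPMF fun x : ι → α => ∏ i, p i (x i) :=
  ⟨fun x => Finset.prod_nonneg fun i _ => (hp i).1 _, by simp [← Fintype.prod_sum, (hp _).2]⟩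

lemma IsPMF.map {α β : Type*} [Fintype α] [Fintype β] [DecidableEq β] {P : α → ℝ}
    (hP : IsPMF P) (f : α → β) : IsPMF fun b => ∑ a with f a = b, P a :=
  ⟨fun b => Finset.sum_nonneg fun a _ => hP.1 a, by rw [Finset.sum_fiberwise, hP.2]⟩

lemma IsPMF.ite_div {α : Type*} [Fintype α] {f q : α → ℝ} {s : ℝ} (hf : ∀ a, 0 ≤ f a)
    (hs : ∑ a, f a = s) (hq : IsPMF q) : IsPMF (if s = 0 then q else fun a => f a / s) := by
  split_ifs with h
  · exact hq
  · refine ⟨fun a => div_nonneg (hf a) ?_, by rw [← Finset.sum_div, hs, div_self h]⟩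
    exact hs ▸ Finset.sum_nonneg fun a _ => hf a

lemma sum_prod_apply_pair_eq_pow {X Y : Type*} [Fintype X] [Fintype Y] (F : X × Y → ℝ) (n : ℕ) :
    ∑ z : (Fin n → X) × (Fin n → Y), ∏ i, F (z.1 i, z.2 i) = (∑ p, F p) ^ n := by
  rw [Fintype.sum_pow, ← Equiv.sum_comp (Equiv.arrowProdEquivProdArrow _ _ _).symm]
  rfl

section Memoryless

variable {X Y W : Type*} [Fintype X] [Fintype Y]

def SynthCode.ofCodebook (gX : W → X → ℝ) (gY : W → Y → ℝ) (hgX : ∀ w, IsPMF (gX w))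
    (hgY : ∀ w, IsPMF (gY w)) {M n : ℕ} (C : Fin M → Fin n → W) : SynthCode X Y M n where
  PX m x := ∏ i, gX (C m i) (x i)
  PY m y := ∏ i, gY (C m i) (y i)
  PX_pmf m := IsPMF.pi fun i => hgX (C m i)
  PY_pmf m := IsPMF.pi fun i => hgY (C m i)

lemma SynthCode.ofCodebook_induced {gX : W → X → ℝ} {gY : W → Y → ℝ} (hgX : ∀ w, IsPMF (gX w))
    (hgY : ∀ w, IsPMF (gY w)) {M n : ℕ} (C : Fin M → Fin n → W) (z : (Fin n → X) × (Fin n → Y)) :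
    (SynthCode.ofCodebook gX gY hgX hgY C).induced z =
      (M : ℝ)⁻¹ * ∑ m, ∏ i, gX (C m i) (z.1 i) * gY (C m i) (z.2 i) := by
  simp [SynthCode.induced, SynthCode.ofCodebook, Finset.prod_mul_distrib]

-- `Λ(s)`: the Rényi sum of order `1 + s` of `P = pW ⊗ gX ⊗ gY` against `π ⊗ pW`.
def chernoffSum [Fintype W] (π : X × Y → ℝ) (pW : W → ℝ) (gX : W → X → ℝ) (gY : W → Y → ℝ)
    (s : ℝ) : ℝ :=
  ∑ p : X × Y, π p ^ (-s) * ∑ w, pW w * (gX w p.1 * gY w p.2) ^ (1 + s)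

variable [Fintype W] {π : X × Y → ℝ} {pW : W → ℝ} {gX : W → X → ℝ} {gY : W → Y → ℝ}

lemma sum_prod_mul_prod_eq_prodDist
    (hmix : ∀ x y, ∑ w, pW w * (gX w x * gY w y) = π (x, y)) (n : ℕ)
    (z : (Fin n → X) × (Fin n → Y)) :
    ∑ v : Fin n → W, (∏ i, pW (v i)) * ∏ i, gX (v i) (z.1 i) * gY (v i) (z.2 i) =
      prodDist π n z := by
  rw [sum_prod_mul_prod fun i w => gX w (z.1 i) * gY w (z.2 i)]
  simp [prodDist, hmix]

lemma sum_rpow_neg_mul_sum_rpow_eq_chernoffSum_pow (hπ : ∀ p, 0 ≤ π p) (hgX : ∀ w x, 0 ≤ gX w x)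
    (hgY : ∀ w y, 0 ≤ gY w y) {T : ℝ} (hT : 0 < T) (s : ℝ) (n : ℕ) :
    ∑ z, (T * prodDist π n z) ^ (-s) *
        ∑ v : Fin n → W, (∏ i, pW (v i)) * (∏ i, gX (v i) (z.1 i) * gY (v i) (z.2 i)) ^ (1 + s) =
      T ^ (-s) * chernoffSum π pW gX gY s ^ n := by
  have hg (w : W) (x : X) (y : Y) : 0 ≤ gX w x * gY w y := mul_nonneg (hgX w x) (hgY w y)
  have hz (z : (Fin n → X) × (Fin n → Y)) : (T * prodDist π n z) ^ (-s) *
      ∑ v : Fin n → W, (∏ i, pW (v i)) * (∏ i, gX (v i) (z.1 i) * gY (v i) (z.2 i)) ^ (1 + s) =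
        T ^ (-s) * ∏ i, (π (z.1 i, z.2 i) ^ (-s) *
          ∑ w, pW w * (gX w (z.1 i) * gY w (z.2 i)) ^ (1 + s)) := by
    simp_rw [← Real.finsetProd_rpow _ _ (fun i _ => hg _ _ _)]
    rw [sum_prod_mul_prod fun i w => (gX w (z.1 i) * gY w (z.2 i)) ^ (1 + s),
      prodDist, Real.mul_rpow hT.le (Finset.prod_nonneg fun i _ => hπ _),
      ← Real.finsetProd_rpow _ _ (fun i _ => hπ _), mul_assoc, ← Finset.prod_mul_distrib]
  rw [Finset.sum_congr rfl fun z _ => hz z, ← Finset.mul_sum,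
    sum_prod_apply_pair_eq_pow (fun p => π p ^ (-s) * ∑ w, pW w * (gX w p.1 * gY w p.2) ^ (1 + s))]
  rfl

lemma chernoffSum_nonneg (hπ : IsPMF π) (hpW : IsPMF pW) (hgX : ∀ w, IsPMF (gX w))
    (hgY : ∀ w, IsPMF (gY w)) (s : ℝ) : 0 ≤ chernoffSum π pW gX gY s :=
  Finset.sum_nonneg fun p _ => mul_nonneg (Real.rpow_nonneg (hπ.1 p) _) <|
    Finset.sum_nonneg fun w _ => mul_nonneg (hpW.1 w) <|
      Real.rpow_nonneg (mul_nonneg ((hgX w).1 _) ((hgY w).1 _)) _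

lemma sum_prodDist (hπ : IsPMF π) (n : ℕ) : ∑ z, prodDist π n z = 1 := by
  simp [prodDist, sum_prod_apply_pair_eq_pow, hπ.2]

theorem exists_synthCode_tvDist_le (hπ : IsPMF π) (hpW : IsPMF pW) (hgX : ∀ w, IsPMF (gX w))
    (hgY : ∀ w, IsPMF (gY w)) (hmix : ∀ x y, ∑ w, pW w * (gX w x * gY w y) = π (x, y))
    {T s : ℝ} (hT : 0 < T) (hs : 0 ≤ s) {M : ℕ} (hM : 0 < M) (n : ℕ) :
    ∃ code : SynthCode X Y M n, tvDist code.induced (prodDist π n) ≤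
      √(T / M) / 2 + T ^ (-s) * chernoffSum π pW gX gY s ^ n := by
  have : NeZero M := ⟨hM.ne'⟩
  set μ : (Fin n → W) → ℝ := fun v => ∏ i, pW (v i)
  set G : (Fin n → W) → (Fin n → X) × (Fin n → Y) → ℝ :=
    fun v z => ∏ i, gX (v i) (z.1 i) * gY (v i) (z.2 i)
  have hμ0 (v : Fin n → W) : 0 ≤ μ v := (IsPMF.pi fun _ => hpW).1 v
  have hG (v : Fin n → W) (z : (Fin n → X) × (Fin n → Y)) : 0 ≤ G v z :=
    Finset.prod_nonneg fun i _ => mul_nonneg ((hgX _).1 _) ((hgY _).1 _)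
  have hmean (z : (Fin n → X) × (Fin n → Y)) : ∑ v, μ v * G v z = prodDist π n z :=
    sum_prod_mul_prod_eq_prodDist hmix n z
  have hπn0 (z : (Fin n → X) × (Fin n → Y)) : 0 ≤ prodDist π n z :=
    Finset.prod_nonneg fun i _ => hπ.1 _
  obtain ⟨C, hC⟩ := exists_sum_abs_avg_sub_le (ι := Fin M) hμ0 (IsPMF.pi fun _ => hpW).2 hG
    (c := fun z => T * ∑ v, μ v * G v z)
    fun z => by rw [hmean]; exact mul_nonneg hT.le (hπn0 z)
  refine ⟨SynthCode.ofCodebook gX gY hgX hgY C, ?_⟩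
  have hsqrt : ∑ z, √(T * (∑ v, μ v * G v z) * (∑ v, μ v * G v z) / M) = √(T / M) := by
    simp_rw [hmean, mul_assoc, mul_div_right_comm, ← sq, Real.sqrt_mul' _ (sq_nonneg _),
      Real.sqrt_sq (hπn0 _), ← Finset.mul_sum, sum_prodDist hπ, mul_one]
  have htail : ∑ z, ∑ v, μ v * (if T * ∑ v', μ v' * G v' z < G v z then G v z else 0) ≤
      T ^ (-s) * chernoffSum π pW gX gY s ^ n := by
    refine (Finset.sum_le_sum fun z _ => sum_mul_ite_lt_le hμ0 (hG · z) hT hs).trans_eq ?_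
    simp_rw [hmean]
    exact sum_rpow_neg_mul_sum_rpow_eq_chernoffSum_pow hπ.1 (fun w => (hgX w).1)
      (fun w => (hgY w).1) hT s n
  calc tvDist (SynthCode.ofCodebook gX gY hgX hgY C).induced (prodDist π n)
      = (∑ z, |(M : ℝ)⁻¹ * ∑ m, G (C m) z - ∑ v, μ v * G v z|) / 2 := by
        simp only [tvDist, SynthCode.ofCodebook_induced, hmean, G]
    _ ≤ (√(T / M) + 2 * (T ^ (-s) * chernoffSum π pW gX gY s ^ n)) / 2 := by
        rw [Fintype.card_fin, Finset.sum_add_distrib, hsqrt, ← Finset.mul_sum] at hC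
        linarith
    _ = √(T / M) / 2 + T ^ (-s) * chernoffSum π pW gX gY s ^ n := by ring

end Memoryless

section Markov

variable {X Y W : Type*} [Fintype X] [Fintype Y] [Fintype W] {P : X × Y × W → ℝ}

lemma isMarkovXWY_of_eq_mul {pW : W → ℝ} {gX : W → X → ℝ} {gY : W → Y → ℝ}
    (hgX : ∀ w, ∑ x, gX w x = 1) (hgY : ∀ w, ∑ y, gY w y = 1)
    (hP : ∀ x y w, P (x, y, w) = pW w * (gX w x * gY w y)) : IsMarkovXWY P := by
  intro x y w
  simp only [hP, Fintype.sum_prod_type, ← Finset.mul_sum, ← Finset.sum_mul, hgX, hgY]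
  ring

lemma IsMarkovXWY.exists_eq_mul (hP : IsPMF P) (hM : IsMarkovXWY P) :
    ∃ (pW : W → ℝ) (gX : W → X → ℝ) (gY : W → Y → ℝ), IsPMF pW ∧ (∀ w, IsPMF (gX w)) ∧
      (∀ w, IsPMF (gY w)) ∧ ∀ x y w, P (x, y, w) = pW w * (gX w x * gY w y) := by
  classical
  set pW : W → ℝ := fun w => ∑ p : X × Y, P (p.1, p.2, w)
  have hsumX (w : W) : ∑ x, ∑ y, P (x, y, w) = pW w :=
    (Fintype.sum_prod_type fun p : X × Y => P (p.1, p.2, w)).symm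
  have hsumY (w : W) : ∑ y, ∑ x, P (x, y, w) = pW w := Finset.sum_comm.trans (hsumX w)
  have hle (x : X) (y : Y) (w : W) : P (x, y, w) ≤ pW w :=
    Finset.single_le_sum (f := fun p : X × Y => P (p.1, p.2, w)) (fun p _ => hP.1 _)
      (Finset.mem_univ (x, y))
  refine ⟨pW, fun w => if pW w = 0 then fun x => ∑ z with z.1 = x, P z
      else fun x => (∑ y, P (x, y, w)) / pW w,
    fun w => if pW w = 0 then fun y => ∑ z with z.2.1 = y, P z
      else fun y => (∑ x, P (x, y, w)) / pW w, ?_, fun w => ?_, fun w => ?_, fun x y w => ?_⟩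
  · refine ⟨fun w => Finset.sum_nonneg fun p _ => hP.1 _, ?_⟩
    simp only [pW, Finset.sum_comm (γ := W), ← hP.2, Fintype.sum_prod_type]
  · exact IsPMF.ite_div (fun x => Finset.sum_nonneg fun y _ => hP.1 _) (hsumX w) (hP.map _)
  · exact IsPMF.ite_div (fun y => Finset.sum_nonneg fun x _ => hP.1 _) (hsumY w) (hP.map _)
  · by_cases hw : pW w = 0
    · simpa [hw] using le_antisymm (hw ▸ hle x y w) (hP.1 _)
    · simp only [hw, if_false]
      field_simp
      exact hM x y w

lemma exists_isMarkovXWY_mutualInfoW_lt {π : X × Y → ℝ} (hπ : IsPMF π) {R : ℝ}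
    (hR : CWyner π < R) :
    ∃ P : X × Y × Fin (Fintype.card X * Fintype.card Y) → ℝ, IsPMF P ∧
      (∀ x y, ∑ w, P (x, y, w) = π (x, y)) ∧ IsMarkovXWY P ∧ mutualInfoW P < R := by
  classical
  -- the trivial decomposition `W = (X, Y)`
  let e : X × Y ≃ Fin (Fintype.card X * Fintype.card Y) :=
    Fintype.equivFinOfCardEq (Fintype.card_prod X Y)
  let gX (w : Fin (Fintype.card X * Fintype.card Y)) : X → ℝ := Pi.single (e.symm w).1 1
  let gY (w : Fin (Fintype.card X * Fintype.card Y)) : Y → ℝ := Pi.single (e.symm w).2 1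
  have hsum (x : X) (y : Y) : ∑ w, π (e.symm w) * (gX w x * gY w y) = π (x, y) := by
    rw [Equiv.sum_comp e.symm
      (fun p => π p * ((Pi.single p.1 1 : X → ℝ) x * (Pi.single p.2 1 : Y → ℝ) y))]
    simp [Pi.single_apply, Fintype.sum_prod_type]
  have hne : {r | ∃ P : X × Y × Fin (Fintype.card X * Fintype.card Y) → ℝ, IsPMF P ∧
      (∀ x y, ∑ w, P (x, y, w) = π (x, y)) ∧ IsMarkovXWY P ∧ r = mutualInfoW P}.Nonempty := by
    refine ⟨_, fun z => π (e.symm z.2.2) * (gX z.2.2 z.1 * gY z.2.2 z.2.1),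
      ⟨fun z => ?_, ?_⟩, hsum, isMarkovXWY_of_eq_mul (pW := fun w => π (e.symm w)) (gX := gX)
        (gY := gY) (fun w => by simp [gX, Pi.single_apply])
        (fun w => by simp [gY, Pi.single_apply]) fun x y w => rfl, rfl⟩
    · have := hπ.1 (e.symm z.2.2)
      simp only [gX, gY, Pi.single_apply]
      positivity
    · simp only [Fintype.sum_prod_type, hsum]
      exact (Fintype.sum_prod_type _).symm.trans hπ.2
  obtain ⟨_, ⟨P, hP, hmarg, hM, rfl⟩, hlt⟩ := exists_lt_of_csInf_lt hne hR
  exact ⟨P, hP, hmarg, hM, hlt⟩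

end Markov

lemma exists_gt_lt_of_hasDerivAt {f g : ℝ → ℝ} {f' g' a : ℝ} (hf : HasDerivAt f f' a)
    (hg : HasDerivAt g g' a) (ha : f a = g a) (h' : f' < g') : ∃ x, a < x ∧ f x < g x := by
  obtain ⟨t, hslope, ht⟩ := (((hg.sub hf).tendsto_slope_zero_right.eventually
    (lt_mem_nhds (sub_pos.mpr h'))).and self_mem_nhdsWithin).exists
  have ht : (0 : ℝ) < t := ht
  simp only [Pi.sub_apply, ha, sub_self, sub_zero, smul_eq_mul] at hslope
  exact ⟨a + t, lt_add_of_pos_right a ht,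
    sub_pos.mp ((pos_iff_pos_of_mul_pos hslope).mp (inv_pos.mpr ht))⟩

lemma exists_pos_sum_mul_exp_lt_exp {ι : Type*} (s : Finset ι) {p c : ι → ℝ}
    (hp : ∑ i ∈ s, p i = 1) {t : ℝ} (ht : ∑ i ∈ s, p i * c i < t) :
    ∃ l, 0 < l ∧ ∑ i ∈ s, p i * Real.exp (l * c i) < Real.exp (l * t) := by
  have hf : HasDerivAt (fun l => ∑ i ∈ s, p i * Real.exp (l * c i)) (∑ i ∈ s, p i * c i) 0 := by
    have := HasDerivAt.fun_sum fun i (_ : i ∈ s) =>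
      ((hasDerivAt_mul_const (c i)).exp).const_mul (p i) (x := 0)
    simpa using this
  have hg : HasDerivAt (fun l => Real.exp (l * t)) t 0 := by
    simpa using (hasDerivAt_mul_const t).exp (x := 0)
  exact exists_gt_lt_of_hasDerivAt hf hg (by simp [hp]) ht

lemma rpow_neg_mul_mul_rpow_one_add {a b g s : ℝ} (hb : 0 ≤ b) (hg : 0 ≤ g) (hab : b * g ≤ a)
    (hs : 0 ≤ s) : a ^ (-s) * (b * g ^ (1 + s)) =
      if 0 < b * g then b * g * Real.exp (s * Real.log (b * g / (a * b))) else 0 := by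
  split_ifs with h
  · have hb' : 0 < b := pos_of_mul_pos_left h hg
    have hg' : 0 < g := pos_of_mul_pos_right h hb
    have ha : 0 < a := h.trans_le hab
    rw [mul_comm a b, mul_div_mul_left _ _ hb'.ne', mul_comm s,
      ← Real.rpow_def_of_pos (div_pos hg' ha), Real.div_rpow hg ha.le, Real.rpow_add hg',
      Real.rpow_one, Real.rpow_neg ha.le]
    field_simp
  · rcases (mul_nonneg hb hg).eq_or_lt' |>.resolve_right h |> mul_eq_zero.mp with h0 | h0
    · simp [h0]
    · simp [h0, Real.zero_rpow (by linarith : 1 + s ≠ 0)]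

section Chernoff

variable {X Y W : Type*} [Fintype X] [Fintype Y] [Fintype W] {P : X × Y × W → ℝ}
  {π : X × Y → ℝ} {pW : W → ℝ} {gX : W → X → ℝ} {gY : W → Y → ℝ}

lemma exists_pos_chernoffSum_lt_exp (hP : IsPMF P) (hpW : ∀ w, 0 ≤ pW w)
    (hgX : ∀ w, IsPMF (gX w)) (hgY : ∀ w, IsPMF (gY w))
    (hfac : ∀ x y w, P (x, y, w) = pW w * (gX w x * gY w y))
    (hmarg : ∀ x y, ∑ w, P (x, y, w) = π (x, y)) {t : ℝ} (ht : mutualInfoW P < t) :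
    ∃ s, 0 < s ∧ chernoffSum π pW gX gY s < Real.exp (s * t) := by
  set S := Finset.univ.filter fun z : X × Y × W => 0 < P z
  set c : X × Y × W → ℝ := fun z => Real.log (P z / (π (z.1, z.2.1) * pW z.2.2))
  have hW (w : W) : ∑ p : X × Y, P (p.1, p.2, w) = pW w := by
    simp [hfac, Fintype.sum_prod_type, ← Finset.mul_sum, (hgX w).2, (hgY w).2]
  have hI : mutualInfoW P = ∑ z ∈ S, P z * c z := by
    simp only [mutualInfoW, hmarg, hW, S, c]
  have hS : ∑ z ∈ S, P z = 1 := by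
    rw [Finset.sum_filter_of_ne fun z _ hz => (hP.1 z).lt_of_ne' hz, hP.2]
  obtain ⟨s, hs, hlt⟩ := exists_pos_sum_mul_exp_lt_exp S hS (hI ▸ ht)
  refine ⟨s, hs, lt_of_eq_of_lt ?_ hlt⟩
  have hle (x : X) (y : Y) (w : W) : P (x, y, w) ≤ π (x, y) :=
    hmarg x y ▸ Finset.single_le_sum (f := fun w => P (x, y, w)) (fun w _ => hP.1 _)
      (Finset.mem_univ w)
  rw [Finset.sum_filter]
  simp only [chernoffSum, Finset.mul_sum, Fintype.sum_prod_type]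
  refine Finset.sum_congr rfl fun x _ => Finset.sum_congr rfl fun y _ =>
    Finset.sum_congr rfl fun w _ => ?_
  simp only [c, hfac]
  exact rpow_neg_mul_mul_rpow_one_add (hpW w) (mul_nonneg ((hgX w).1 x) ((hgY w).1 y))
    (hfac x y w ▸ hle x y w) hs.le

end Chernoff

lemma exists_pos_eventually_mul_pow_le_exp {q : ℝ} (hq0 : 0 ≤ q) (hq1 : q < 1) (K : ℝ) :
    ∃ γ, 0 < γ ∧ ∀ᶠ n : ℕ in atTop, K * q ^ n ≤ Real.exp (-(γ * n)) := by
  obtain ⟨ρ, hqρ, hρ1⟩ := exists_between hq1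
  have hρ0 : 0 < ρ := hq0.trans_lt hqρ
  refine ⟨-Real.log ρ, neg_pos.mpr (Real.log_neg hρ0 hρ1), ?_⟩
  have hlim : Tendsto (fun n : ℕ => K * (q / ρ) ^ n) atTop (nhds 0) := by
    simpa using (tendsto_pow_atTop_nhds_zero_of_lt_one (div_nonneg hq0 hρ0.le)
      ((div_lt_one hρ0).mpr hqρ)).const_mul K
  filter_upwards [hlim.eventually (ge_mem_nhds zero_lt_one)] with n hn
  calc K * q ^ n = K * (q / ρ) ^ n * ρ ^ n := by rw [div_pow]; field_simp
    _ ≤ 1 * ρ ^ n := mul_le_mul_of_nonneg_right hn (pow_nonneg hρ0.le n)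
    _ = Real.exp (-(-Real.log ρ * n)) := by
        rw [one_mul, neg_mul, neg_neg, mul_comm, Real.exp_nat_mul, Real.exp_log hρ0]

lemma numMsgs_pos (R : ℝ) (n : ℕ) : 0 < numMsgs R n :=
  Nat.ceil_pos.mpr (Real.exp_pos _)

lemma sqrt_exp_div_numMsgs_le (R t : ℝ) (n : ℕ) :
    √(Real.exp (n * t) / numMsgs R n) ≤ Real.exp ((t - R) / 2) ^ n := by
  calc √(Real.exp (n * t) / numMsgs R n) ≤ √(Real.exp (n * t) / Real.exp (n * R)) :=
        Real.sqrt_le_sqrt (div_le_div_of_nonneg_left (Real.exp_pos _).le (Real.exp_pos _)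
          (Nat.le_ceil _))
    _ = Real.exp ((t - R) / 2) ^ n := by
        rw [← Real.exp_sub, ← Real.exp_half, ← Real.exp_nat_mul]
        ring_nf

lemma exp_rpow_neg_mul_pow (Λ s t : ℝ) (n : ℕ) :
    Real.exp (n * t) ^ (-s) * Λ ^ n = (Λ * Real.exp (-(s * t))) ^ n := by
  rw [← Real.exp_mul, mul_pow, ← Real.exp_nat_mul, mul_comm]
  ring_nf

/-- Exponential achievability under total variation: for every rate `R > C_Wyner(X;Y)`
there exist a sequence of rate-`R` synthesis codes and a constant `c > 0` such that
the TV distance between the synthesized and target distributions is at most `e^{−cn}`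
for all sufficiently large `n`. -/
theorem tv_exponential_achievability
    {X Y : Type*} [Fintype X] [Fintype Y] (π : X × Y → ℝ) (hπ : IsPMF π)
    (R : ℝ) (hR : CWyner π < R) :
    ∃ (c : (n : ℕ) → SynthCode X Y (numMsgs R n) n) (γ : ℝ), 0 < γ ∧
      ∀ᶠ n : ℕ in atTop,
        tvDist ((c n).induced) (prodDist π n) ≤ Real.exp (-(γ * n)) := by
  obtain ⟨P, hP, hmarg, hM, hIR⟩ := exists_isMarkovXWY_mutualInfoW_lt hπ hR
  obtain ⟨pW, gX, gY, hpW, hgX, hgY, hfac⟩ := hM.exists_eq_mul hP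
  obtain ⟨t, hIt, htR⟩ := exists_between hIR
  obtain ⟨s, hs, hΛ⟩ := exists_pos_chernoffSum_lt_exp hP hpW.1 hgX hgY hfac hmarg hIt
  have hmix (x : X) (y : Y) : ∑ w, pW w * (gX w x * gY w y) = π (x, y) := by
    simp only [← hfac, hmarg]
  set q := max (Real.exp ((t - R) / 2)) (chernoffSum π pW gX gY s * Real.exp (-(s * t)))
  have hq1 : q < 1 := max_lt (Real.exp_lt_one_iff.mpr (by linarith)) (by
    rwa [Real.exp_neg, ← div_eq_mul_inv, div_lt_one (Real.exp_pos _)])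
  have hq0 : 0 ≤ q := le_max_of_le_left (Real.exp_pos _).le
  obtain ⟨γ, hγ, hev⟩ := exists_pos_eventually_mul_pow_le_exp (q := q) hq0 hq1 2
  choose code hcode using fun n : ℕ => exists_synthCode_tvDist_le hπ hpW hgX hgY hmix
    (Real.exp_pos (n * t)) hs.le (numMsgs_pos R n) n
  refine ⟨code, γ, hγ, hev.mono fun n hn => (hcode n).trans ?_⟩
  have h1 : √(Real.exp (n * t) / numMsgs R n) ≤ q ^ n := (sqrt_exp_div_numMsgs_le R t n).trans
    (pow_le_pow_left₀ (Real.exp_pos _).le (le_max_left _ _) n)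
  have h2 : Real.exp (n * t) ^ (-s) * chernoffSum π pW gX gY s ^ n ≤ q ^ n := by
    rw [exp_rpow_neg_mul_pow]
    exact pow_le_pow_left₀ (mul_nonneg (chernoffSum_nonneg hπ hpW hgX hgY s) (Real.exp_pos _).le)
      (le_max_right _ _) n
  linarith [pow_nonneg hq0 n]
end
end

section
/- Positivity of the strong converse exponent: if R < C_Wyner(X;Y), then F(R) > 0, where F(R) is the strong converse exponent defined below. -/
open Filter

noncomputable section

/-- Marginal `Q_U` of a distribution on `X × Y × U`. -/
def margU {X Y U : Type*} [Fintype X] [Fintype Y] [Fintype U] (Q : X × Y × U → ℝ) (u : U) : ℝ :=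
  ∑ p : X × Y, Q (p.1, p.2, u)

/-- Marginal `Q_{XU}` of a distribution on `X × Y × U`. -/
def margXU {X Y U : Type*} [Fintype X] [Fintype Y] [Fintype U] (Q : X × Y × U → ℝ)
    (x : X) (u : U) : ℝ := ∑ y, Q (x, y, u)

/-- Marginal `Q_{YU}` of a distribution on `X × Y × U`. -/
def margYU {X Y U : Type*} [Fintype X] [Fintype Y] [Fintype U] (Q : X × Y × U → ℝ)
    (y : Y) (u : U) : ℝ := ∑ x, Q (x, y, u)

/-- Marginal `Q_{XY}` of a distribution on `X × Y × U`. -/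
def margXY {X Y U : Type*} [Fintype X] [Fintype Y] [Fintype U] (Q : X × Y × U → ℝ)
    (x : X) (y : Y) : ℝ := ∑ u, Q (x, y, u)

/-- The set `𝒬` of distributions `Q_{XYU}` on `X × Y × U` (with `|U| = |X||Y|`)
whose `X × Y` marginal is supported inside `supp π`. -/
def QClass {X Y : Type*} [Fintype X] [Fintype Y] (π : X × Y → ℝ) :
    Set (X × Y × Fin (Fintype.card X * Fintype.card Y) → ℝ) :=
  { Q | IsPMF Q ∧ ∀ x y, 0 < margXY Q x y → 0 < π (x, y) }

/-- The linear combination of likelihood ratios `ω^{(α)}_{Q_{XYU}}(x,y|u)`: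
`ᾱ ( log (Q_{XY}/π) + log (Q_{XY|U}/(Q_{X|U}Q_{Y|U})) ) + α log (Q_{XY|U}/π)`. -/
def omegaFn {X Y U : Type*} [Fintype X] [Fintype Y] [Fintype U] (π : X × Y → ℝ) (α : ℝ)
    (Q : X × Y × U → ℝ) (z : X × Y × U) : ℝ :=
  (1 - α) * (Real.log (margXY Q z.1 z.2.1 / π (z.1, z.2.1)) +
      Real.log (Q z * margU Q z.2.2 / (margXU Q z.1 z.2.2 * margYU Q z.2.1 z.2.2))) +
    α * Real.log (Q z / (margU Q z.2.2 * π (z.1, z.2.1)))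

/-- The negative cumulant generating function `Ω^{(α,θ)}(Q_{XYU})`. -/
def OmegaQ {X Y U : Type*} [Fintype X] [Fintype Y] [Fintype U] (π : X × Y → ℝ) (α θ : ℝ)
    (Q : X × Y × U → ℝ) : ℝ :=
  -Real.log (∑ z ∈ Finset.univ.filter (fun z : X × Y × U => 0 < Q z),
    Q z * Real.exp (-(θ * omegaFn π α Q z)))

/-- The minimized negative cumulant generating function `Ω^{(α,θ)}`. -/
def OmegaMin {X Y : Type*} [Fintype X] [Fintype Y] (π : X × Y → ℝ) (α θ : ℝ) : ℝ :=
  sInf { r | ∃ Q ∈ QClass π, r = OmegaQ π α θ Q }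

/-- The exponent `F^{(α,θ)}(R) = (Ω^{(α,θ)} − θαR)/(1 + (5−3α)θ)`. -/
def Fat {X Y : Type*} [Fintype X] [Fintype Y] (π : X × Y → ℝ) (α θ R : ℝ) : ℝ :=
  (OmegaMin π α θ - θ * α * R) / (1 + (5 - 3 * α) * θ)

/-- The strong converse exponent `F(R) = sup_{(α,θ) ∈ [0,1]×[0,∞)} F^{(α,θ)}(R)`. -/
def Fexp {X Y : Type*} [Fintype X] [Fintype Y] (π : X × Y → ℝ) (R : ℝ) : ℝ :=
  sSup { r | ∃ α ∈ Set.Icc (0 : ℝ) 1, ∃ θ ∈ Set.Ici (0 : ℝ), r = Fat π α θ R }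

/-!
Under `Q`, the mean of `ω^{(α)}` is `ᾱ (D(Q_{XY} ‖ π) + I(X;Y|U)) + α D(Q_{XYU} ‖ Q_U π)`.
The bracket vanishes exactly when `Q` is feasible for Wyner's problem, and then the last term is
`I(XY;U) ≥ C_Wyner > R`. All three terms are continuous on the compact set `𝒬` (write them
through `t ↦ t log t`), so some `α, ε > 0` give `E_Q[ω^{(α)}] ≥ αR + ε` for every `Q ∈ 𝒬`.

For `θ ≤ 1/6`, `e^{-x} ≤ 1 - x + x² e^{|x|}` and `|ω| ≤ -log π - 3 log Q` give
`Ω^{(α,θ)}(Q) ≥ θ E_Q[ω] - θ² M` with `M` independent of `Q`, hence `F^{(α,θ)}(R) > 0` for small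
`θ`. Jensen's inequality gives `Ω^{(α,θ)}(Q) ≤ θ E_Q[ω]`, which bounds the family `F^{(α,θ)}(R)`
from above, so its supremum is positive.
-/

open Finset InformationTheory
open Real (log exp)

lemma mul_log_div_eq_sub_add_klFun {a b : ℝ} (hb : 0 < b) :
    a * log (a / b) = a - b + b * klFun (a / b) := by
  rw [klFun]
  field_simp
  ring

lemma sub_le_mul_log_div {a b : ℝ} (ha : 0 ≤ a) (hb : 0 ≤ b) (hab : 0 < a → 0 < b) :
    a - b ≤ a * log (a / b) := by
  rcases ha.eq_or_lt with rfl | ha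
  · simpa using hb
  · rw [mul_log_div_eq_sub_add_klFun (hab ha)]
    have := klFun_nonneg (div_nonneg ha.le hb)
    nlinarith

lemma eq_of_mul_log_div_le {a b : ℝ} (ha : 0 ≤ a) (hb : 0 ≤ b) (hab : 0 < a → 0 < b)
    (h : a * log (a / b) ≤ a - b) : a = b := by
  rcases ha.eq_or_lt with rfl | ha
  · simp only [zero_mul, zero_sub] at h
    linarith
  · have hb := hab ha
    rw [mul_log_div_eq_sub_add_klFun hb] at h
    have hkl : klFun (a / b) = 0 :=
      le_antisymm (nonpos_of_mul_nonpos_right (by linarith) hb)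
        (klFun_nonneg (div_nonneg ha.le hb.le))
    rwa [klFun_eq_zero_iff (div_nonneg ha.le hb.le), div_eq_one_iff_eq hb.ne'] at hkl

section Gibbs

variable {ι : Type*} [Fintype ι] {a b : ι → ℝ}

lemma sum_mul_log_div_nonneg (ha : ∀ i, 0 ≤ a i) (hb : ∀ i, 0 ≤ b i)
    (hab : ∀ i, 0 < a i → 0 < b i) (hsum : ∑ i, b i ≤ ∑ i, a i) :
    0 ≤ ∑ i, a i * log (a i / b i) := by
  have := sum_le_sum fun i (_ : i ∈ univ) ↦ sub_le_mul_log_div (ha i) (hb i) (hab i)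
  rw [sum_sub_distrib] at this
  linarith

lemma eq_of_sum_mul_log_div_nonpos (ha : ∀ i, 0 ≤ a i) (hb : ∀ i, 0 ≤ b i)
    (hab : ∀ i, 0 < a i → 0 < b i) (hsum : ∑ i, a i = ∑ i, b i)
    (h : ∑ i, a i * log (a i / b i) ≤ 0) : a = b := by
  have hterm : ∀ i ∈ univ, 0 ≤ a i * log (a i / b i) - (a i - b i) := fun i _ ↦
    sub_nonneg.2 (sub_le_mul_log_div (ha i) (hb i) (hab i))
  have hzero := (sum_eq_zero_iff_of_nonneg hterm).1 <| le_antisymm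
    (by rw [sum_sub_distrib, sum_sub_distrib]; linarith) (sum_nonneg hterm)
  funext i
  exact eq_of_mul_log_div_le (ha i) (hb i) (hab i) (sub_eq_zero.1 (hzero i (mem_univ i))).le

end Gibbs

section PMF

variable {ι : Type*} [Fintype ι] {a : ι → ℝ}

lemma sum_filter_pos_mul (ha : ∀ i, 0 ≤ a i) (f : ι → ℝ) :
    ∑ i ∈ univ.filter (fun i ↦ 0 < a i), a i * f i = ∑ i, a i * f i :=
  sum_filter_of_ne fun i _ h ↦ (ha i).lt_of_ne fun h0 ↦ h (by rw [← h0, zero_mul])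

lemma IsPMF.sum_filter_pos (ha : IsPMF a) : ∑ i ∈ univ.filter (fun i ↦ 0 < a i), a i = 1 :=
  (sum_filter_of_ne fun i _ h ↦ (ha.1 i).lt_of_ne' h).trans ha.2

lemma IsPMF.exists_pos (ha : IsPMF a) : ∃ i, 0 < a i := by
  obtain ⟨i, -, hi⟩ := exists_lt_of_sum_lt (s := univ) (f := fun _ ↦ (0 : ℝ)) (g := a)
    (by simp [ha.2])
  exact ⟨i, hi⟩

lemma IsPMF.le_one (ha : IsPMF a) (i : ι) : a i ≤ 1 :=
  ha.2 ▸ single_le_sum (fun j _ ↦ ha.1 j) (mem_univ i)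

end PMF

section Marginals

variable {X Y U : Type*} [Fintype X] [Fintype Y] [Fintype U] {Q : X × Y × U → ℝ}

lemma sum_mul_margU (Q : X × Y × U → ℝ) (f : U → ℝ) :
    ∑ z, Q z * f z.2.2 = ∑ u, margU Q u * f u := by
  calc ∑ z, Q z * f z.2.2 = ∑ x, ∑ u, ∑ y, Q (x, y, u) * f u := by
        simp only [Fintype.sum_prod_type]
        exact sum_congr rfl fun _ _ ↦ Finset.sum_comm
    _ = ∑ u, margU Q u * f u := by
        simp only [margU, Fintype.sum_prod_type, sum_mul]
        exact Finset.sum_comm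

lemma sum_mul_margXY (Q : X × Y × U → ℝ) (f : X → Y → ℝ) :
    ∑ z, Q z * f z.1 z.2.1 = ∑ x, ∑ y, margXY Q x y * f x y := by
  simp only [margXY, sum_mul, Fintype.sum_prod_type]

lemma sum_mul_margXU (Q : X × Y × U → ℝ) (f : X → U → ℝ) :
    ∑ z, Q z * f z.1 z.2.2 = ∑ x, ∑ u, margXU Q x u * f x u := by
  simp only [margXU, sum_mul, Fintype.sum_prod_type]
  exact sum_congr rfl fun _ _ ↦ Finset.sum_comm

lemma sum_mul_margYU (Q : X × Y × U → ℝ) (f : Y → U → ℝ) :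
    ∑ z, Q z * f z.2.1 z.2.2 = ∑ y, ∑ u, margYU Q y u * f y u := by
  simp only [margYU, sum_mul, Fintype.sum_prod_type]
  rw [Finset.sum_comm]
  exact sum_congr rfl fun _ _ ↦ Finset.sum_comm

lemma sum_margXU (Q : X × Y × U → ℝ) (u : U) : ∑ x, margXU Q x u = margU Q u := by
  rw [margU, Fintype.sum_prod_type]
  rfl

lemma sum_margYU (Q : X × Y × U → ℝ) (u : U) : ∑ y, margYU Q y u = margU Q u := by
  rw [margU, Fintype.sum_prod_type, Finset.sum_comm]
  rfl

lemma sum_margU (Q : X × Y × U → ℝ) : ∑ u, margU Q u = ∑ z, Q z := by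
  simpa using (sum_mul_margU Q fun _ ↦ 1).symm

lemma sum_margXY (Q : X × Y × U → ℝ) : ∑ x, ∑ y, margXY Q x y = ∑ z, Q z := by
  simpa using (sum_mul_margXY Q fun _ _ ↦ 1).symm

lemma margXU_nonneg (hQ : ∀ z, 0 ≤ Q z) (x : X) (u : U) : 0 ≤ margXU Q x u :=
  sum_nonneg fun _ _ ↦ hQ _

lemma margYU_nonneg (hQ : ∀ z, 0 ≤ Q z) (y : Y) (u : U) : 0 ≤ margYU Q y u :=
  sum_nonneg fun _ _ ↦ hQ _

lemma margU_nonneg (hQ : ∀ z, 0 ≤ Q z) (u : U) : 0 ≤ margU Q u :=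
  sum_nonneg fun _ _ ↦ hQ _

lemma le_margXY (hQ : ∀ z, 0 ≤ Q z) (x : X) (y : Y) (u : U) : Q (x, y, u) ≤ margXY Q x y :=
  single_le_sum (f := fun u ↦ Q (x, y, u)) (fun _ _ ↦ hQ _) (mem_univ u)

lemma le_margXU (hQ : ∀ z, 0 ≤ Q z) (x : X) (y : Y) (u : U) : Q (x, y, u) ≤ margXU Q x u :=
  single_le_sum (f := fun y ↦ Q (x, y, u)) (fun _ _ ↦ hQ _) (mem_univ y)

lemma le_margYU (hQ : ∀ z, 0 ≤ Q z) (x : X) (y : Y) (u : U) : Q (x, y, u) ≤ margYU Q y u :=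
  single_le_sum (f := fun x ↦ Q (x, y, u)) (fun _ _ ↦ hQ _) (mem_univ x)

lemma le_margU (hQ : ∀ z, 0 ≤ Q z) (x : X) (y : Y) (u : U) : Q (x, y, u) ≤ margU Q u :=
  single_le_sum (f := fun p : X × Y ↦ Q (p.1, p.2, u)) (fun _ _ ↦ hQ _) (mem_univ (x, y))

lemma margXU_le_margU (hQ : ∀ z, 0 ≤ Q z) (x : X) (u : U) : margXU Q x u ≤ margU Q u := by
  rw [← sum_margXU]
  exact single_le_sum (fun x _ ↦ margXU_nonneg hQ x u) (mem_univ x)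

lemma margYU_le_margU (hQ : ∀ z, 0 ≤ Q z) (y : Y) (u : U) : margYU Q y u ≤ margU Q u := by
  rw [← sum_margYU]
  exact single_le_sum (fun y _ ↦ margYU_nonneg hQ y u) (mem_univ y)

lemma IsPMF.margXY (hQ : IsPMF Q) : IsPMF fun p : X × Y ↦ margXY Q p.1 p.2 :=
  ⟨fun _ ↦ sum_nonneg fun _ _ ↦ hQ.1 _, by rw [Fintype.sum_prod_type, sum_margXY, hQ.2]⟩

lemma IsPMF.margU (hQ : IsPMF Q) : IsPMF (margU Q) :=
  ⟨margU_nonneg hQ.1, by rw [sum_margU, hQ.2]⟩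

lemma margs_pos_of_pos (hQ : ∀ z, 0 ≤ Q z) {x : X} {y : Y} {u : U} (h : 0 < Q (x, y, u)) :
    0 < margXY Q x y ∧ 0 < margXU Q x u ∧ 0 < margYU Q y u ∧ 0 < margU Q u :=
  ⟨h.trans_le (le_margXY hQ x y u), h.trans_le (le_margXU hQ x y u),
    h.trans_le (le_margYU hQ x y u), h.trans_le (le_margU hQ x y u)⟩

end Marginals

section Divergences

variable {X Y U : Type*} [Fintype X] [Fintype Y] [Fintype U] {π : X × Y → ℝ}
  {Q : X × Y × U → ℝ}

/-- `D(Q_{XY} ‖ π_{XY})`. -/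
def klDivXY (π : X × Y → ℝ) (Q : X × Y × U → ℝ) : ℝ :=
  ∑ z, Q z * log (margXY Q z.1 z.2.1 / π (z.1, z.2.1))

/-- `I(X; Y | U)` under `Q`. -/
def condMutualInfo (Q : X × Y × U → ℝ) : ℝ :=
  ∑ z, Q z * log (Q z * margU Q z.2.2 / (margXU Q z.1 z.2.2 * margYU Q z.2.1 z.2.2))

/-- `D(Q_{XYU} ‖ Q_U × π_{XY})`. -/
def klDivU (π : X × Y → ℝ) (Q : X × Y × U → ℝ) : ℝ :=
  ∑ z, Q z * log (Q z / (margU Q z.2.2 * π (z.1, z.2.1)))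

lemma sum_mul_omegaFn (π : X × Y → ℝ) (α : ℝ) (Q : X × Y × U → ℝ) :
    ∑ z, Q z * omegaFn π α Q z =
      (1 - α) * (klDivXY π Q + condMutualInfo Q) + α * klDivU π Q := by
  simp only [klDivXY, condMutualInfo, klDivU, mul_add, mul_sum, ← sum_add_distrib]
  exact sum_congr rfl fun z _ ↦ by rw [omegaFn]; ring

lemma klDivXY_eq_sum (π : X × Y → ℝ) (Q : X × Y × U → ℝ) :
    klDivXY π Q = ∑ p : X × Y, margXY Q p.1 p.2 * log (margXY Q p.1 p.2 / π p) := by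
  rw [klDivXY, sum_mul_margXY Q fun x y ↦ log (margXY Q x y / π (x, y)), Fintype.sum_prod_type]

lemma klDivXY_nonneg (hQ : IsPMF Q) (hπ : IsPMF π)
    (hsupp : ∀ x y, 0 < margXY Q x y → 0 < π (x, y)) : 0 ≤ klDivXY π Q := by
  rw [klDivXY_eq_sum]
  exact sum_mul_log_div_nonneg hQ.margXY.1 hπ.1 (fun p ↦ hsupp p.1 p.2)
    (by rw [hπ.2, hQ.margXY.2])

lemma margXY_eq_of_klDivXY_nonpos (hQ : IsPMF Q) (hπ : IsPMF π)
    (hsupp : ∀ x y, 0 < margXY Q x y → 0 < π (x, y)) (h : klDivXY π Q ≤ 0) (x : X) (y : Y) :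
    margXY Q x y = π (x, y) := by
  rw [klDivXY_eq_sum] at h
  exact congrFun (eq_of_sum_mul_log_div_nonpos hQ.margXY.1 hπ.1 (fun p ↦ hsupp p.1 p.2)
    (by rw [hπ.2, hQ.margXY.2]) h) (x, y)

/-- `Q_U Q_{X|U} Q_{Y|U}`: the distribution that agrees with `Q` on the `XU` and `YU` marginals
and makes `X − U − Y` a Markov chain. -/
def condProd (Q : X × Y × U → ℝ) (z : X × Y × U) : ℝ :=
  margXU Q z.1 z.2.2 * margYU Q z.2.1 z.2.2 / margU Q z.2.2

lemma condProd_nonneg (hQ : ∀ z, 0 ≤ Q z) (z : X × Y × U) : 0 ≤ condProd Q z :=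
  div_nonneg (mul_nonneg (margXU_nonneg hQ _ _) (margYU_nonneg hQ _ _)) (margU_nonneg hQ _)

lemma condProd_pos (hQ : ∀ z, 0 ≤ Q z) {z : X × Y × U} (h : 0 < Q z) : 0 < condProd Q z := by
  obtain ⟨-, hxu, hyu, hu⟩ := margs_pos_of_pos hQ h
  exact div_pos (mul_pos hxu hyu) hu

lemma sum_condProd (Q : X × Y × U → ℝ) : ∑ z, condProd Q z = ∑ z, Q z := by
  calc ∑ z, condProd Q z = ∑ u, (∑ x, margXU Q x u) * (∑ y, margYU Q y u) / margU Q u := by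
        simp only [condProd, Fintype.sum_prod_type, sum_mul_sum, sum_div]
        exact (sum_congr rfl fun _ _ ↦ Finset.sum_comm).trans Finset.sum_comm
    _ = ∑ z, Q z := by simp only [sum_margXU, sum_margYU, mul_self_div_self, sum_margU]

lemma condMutualInfo_eq_sum_mul_log_div_condProd (Q : X × Y × U → ℝ) :
    condMutualInfo Q = ∑ z, Q z * log (Q z / condProd Q z) := by
  simp only [condMutualInfo, condProd, div_div_eq_mul_div]

lemma condMutualInfo_nonneg (hQ : ∀ z, 0 ≤ Q z) : 0 ≤ condMutualInfo Q := by
  rw [condMutualInfo_eq_sum_mul_log_div_condProd]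
  exact sum_mul_log_div_nonneg hQ (condProd_nonneg hQ) (fun _ ↦ condProd_pos hQ)
    (sum_condProd Q).le

lemma isMarkovXWY_of_condMutualInfo_nonpos (hQ : ∀ z, 0 ≤ Q z) (h : condMutualInfo Q ≤ 0) :
    IsMarkovXWY Q := by
  rw [condMutualInfo_eq_sum_mul_log_div_condProd] at h
  have heq := eq_of_sum_mul_log_div_nonpos hQ (condProd_nonneg hQ) (fun _ ↦ condProd_pos hQ)
    (sum_condProd Q).symm h
  intro x y u
  change Q (x, y, u) * margU Q u = margXU Q x u * margYU Q y u
  rcases (margU_nonneg hQ u).eq_or_lt with hu | hu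
  · have hxu : margXU Q x u = 0 :=
      le_antisymm (hu ▸ margXU_le_margU hQ x u) (margXU_nonneg hQ x u)
    rw [← hu, hxu, zero_mul, mul_zero]
  · rw [congrFun heq (x, y, u), condProd]
    exact div_mul_cancel₀ _ hu.ne'

lemma sum_margU_mul_eq_one (hQ : IsPMF Q) (hπ : IsPMF π) :
    ∑ z : X × Y × U, margU Q z.2.2 * π (z.1, z.2.1) = 1 := by
  rw [← (Equiv.prodAssoc X Y U).sum_comp, Fintype.sum_prod_type]
  simp only [Equiv.prodAssoc_apply, ← sum_mul, sum_margU, hQ.2, one_mul, hπ.2]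

lemma klDivU_nonneg (hQ : IsPMF Q) (hπ : IsPMF π)
    (hsupp : ∀ x y, 0 < margXY Q x y → 0 < π (x, y)) : 0 ≤ klDivU π Q := by
  refine sum_mul_log_div_nonneg hQ.1 (fun z ↦ mul_nonneg (margU_nonneg hQ.1 _) (hπ.1 _))
    (fun z h ↦ ?_) (by rw [sum_margU_mul_eq_one hQ hπ, hQ.2])
  obtain ⟨hxy, -, -, hu⟩ := margs_pos_of_pos hQ.1 h
  exact mul_pos hu (hsupp _ _ hxy)

end Divergences

section Continuity

variable {X Y U : Type*} [Fintype X] [Fintype Y] [Fintype U] {π : X × Y → ℝ}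
  {Q : X × Y × U → ℝ}

lemma continuous_mul_log_div_const (c : ℝ) : Continuous fun x : ℝ ↦ x * log (x / c) := by
  rcases eq_or_ne c 0 with rfl | hc
  · -- `x / 0 = 0` and `log 0 = 0`, so the function is identically zero.
    simpa using continuous_const
  · have : (fun x : ℝ ↦ x * log (x / c)) = fun x ↦ x * log x - x * log c := by
      funext x
      rcases eq_or_ne x 0 with rfl | hx
      · simp
      · rw [Real.log_div hx hc]
        ring
    rw [this]
    fun_prop

lemma continuous_klDivXY (π : X × Y → ℝ) :
    Continuous (klDivXY π : (X × Y × U → ℝ) → ℝ) := by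
  rw [funext (klDivXY_eq_sum π)]
  exact continuous_finsetSum _ fun p _ ↦ (continuous_mul_log_div_const (π p)).comp
    (continuous_finsetSum _ fun u _ ↦ continuous_apply _)

lemma condMutualInfo_eq_sum_mul_log (hQ : ∀ z, 0 ≤ Q z) :
    condMutualInfo Q = ∑ z, Q z * log (Q z) + ∑ u, margU Q u * log (margU Q u)
      - ∑ x, ∑ u, margXU Q x u * log (margXU Q x u)
      - ∑ y, ∑ u, margYU Q y u * log (margYU Q y u) := by
  rw [← sum_mul_margU Q fun u ↦ log (margU Q u), ← sum_mul_margXU Q fun x u ↦ log (margXU Q x u),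
    ← sum_mul_margYU Q fun y u ↦ log (margYU Q y u), ← sum_add_distrib, ← sum_sub_distrib,
    ← sum_sub_distrib]
  refine sum_congr rfl fun ⟨x, y, u⟩ _ ↦ ?_
  rcases (hQ (x, y, u)).eq_or_lt with h | h
  · simp [← h]
  · obtain ⟨-, hxu, hyu, hu⟩ := margs_pos_of_pos hQ h
    rw [Real.log_div (by positivity) (by positivity), Real.log_mul h.ne' hu.ne',
      Real.log_mul hxu.ne' hyu.ne']
    ring

lemma klDivU_eq_sum_mul_log (hQ : ∀ z, 0 ≤ Q z)
    (hsupp : ∀ x y, 0 < margXY Q x y → 0 < π (x, y)) :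
    klDivU π Q = ∑ z, Q z * log (Q z) - ∑ u, margU Q u * log (margU Q u)
      - ∑ z, Q z * log (π (z.1, z.2.1)) := by
  rw [← sum_mul_margU Q fun u ↦ log (margU Q u), ← sum_sub_distrib, ← sum_sub_distrib]
  refine sum_congr rfl fun ⟨x, y, u⟩ _ ↦ ?_
  rcases (hQ (x, y, u)).eq_or_lt with h | h
  · simp [← h]
  · obtain ⟨hxy, -, -, hu⟩ := margs_pos_of_pos hQ h
    rw [Real.log_div h.ne' (mul_pos hu (hsupp x y hxy)).ne',
      Real.log_mul hu.ne' (hsupp x y hxy).ne']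
    ring

lemma continuousOn_condMutualInfo :
    ContinuousOn (condMutualInfo : (X × Y × U → ℝ) → ℝ) {Q | ∀ z, 0 ≤ Q z} := by
  refine ContinuousOn.congr ?_ fun Q hQ ↦ condMutualInfo_eq_sum_mul_log hQ
  apply Continuous.continuousOn
  simp only [margU, margXU, margYU]
  fun_prop

lemma continuousOn_klDivU (π : X × Y → ℝ) :
    ContinuousOn (klDivU π) (QClass π) := by
  refine ContinuousOn.congr ?_ fun Q hQ ↦ klDivU_eq_sum_mul_log hQ.1.1 hQ.2
  apply Continuous.continuousOn
  simp only [margU]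
  fun_prop

end Continuity

section Wyner

variable {X Y : Type*} [Fintype X] [Fintype Y] {π : X × Y → ℝ}

lemma mutualInfoW_eq_klDivU {U : Type*} [Fintype U] {Q : X × Y × U → ℝ} (hQ : ∀ z, 0 ≤ Q z)
    (hmarg : ∀ x y, margXY Q x y = π (x, y)) : mutualInfoW Q = klDivU π Q := by
  rw [mutualInfoW, sum_filter_pos_mul hQ]
  refine sum_congr rfl fun z _ ↦ ?_
  change Q z * log (Q z / (margXY Q z.1 z.2.1 * margU Q z.2.2)) = _
  rw [hmarg, mul_comm (π _)]

lemma CWyner_le_klDivU (hπ : IsPMF π) {Q : X × Y × Fin (Fintype.card X * Fintype.card Y) → ℝ}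
    (hQ : Q ∈ QClass π) (h : klDivXY π Q + condMutualInfo Q ≤ 0) : CWyner π ≤ klDivU π Q := by
  have hXY := klDivXY_nonneg hQ.1 hπ hQ.2
  have hCMI := condMutualInfo_nonneg hQ.1.1
  have hmarg := margXY_eq_of_klDivXY_nonpos hQ.1 hπ hQ.2 (by linarith)
  rw [← mutualInfoW_eq_klDivU hQ.1.1 hmarg]
  refine csInf_le ⟨0, ?_⟩
    ⟨Q, hQ.1, hmarg, isMarkovXWY_of_condMutualInfo_nonpos hQ.1.1 (by linarith), rfl⟩
  rintro r ⟨P, hP, hPmarg, -, rfl⟩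
  rw [mutualInfoW_eq_klDivU hP.1 hPmarg]
  exact klDivU_nonneg hP hπ fun x y h ↦ hPmarg x y ▸ h

end Wyner

lemma IsCompact.exists_add_le_convexComb {β : Type*} [TopologicalSpace β] {K : Set β}
    (hK : IsCompact K) {A B : β → ℝ} (hA : ContinuousOn A K) (hB : ContinuousOn B K)
    (hA0 : ∀ q ∈ K, 0 ≤ A q) (hB0 : ∀ q ∈ K, 0 ≤ B q) {r : ℝ}
    (hr : ∀ q ∈ K, A q ≤ 0 → r < B q) :
    ∃ α, 0 < α ∧ α ≤ 1 ∧ ∃ ε > 0, ∀ q ∈ K, α * r + ε ≤ (1 - α) * A q + α * B q := by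
  obtain ⟨η, hη, hηle⟩ := hK.exists_forall_le' (f := fun q ↦ max (A q) (B q - r))
    (hA.sup (hB.sub continuousOn_const)) (a := 0)
    fun q hq ↦ by
      by_cases h : A q ≤ 0
      · exact lt_sup_of_lt_right (sub_pos.2 (hr q hq h))
      · exact lt_sup_of_lt_left (not_le.1 h)
  set α := min (1 / 4) (η / (4 * (|r| + 1)))
  have hα : 0 < α := by positivity
  have hα4 : α ≤ 1 / 4 := min_le_left _ _
  have hαr : α * r ≤ η / 4 := by
    have := min_le_right (1 / 4) (η / (4 * (|r| + 1)))
    calc α * r ≤ α * (|r| + 1) := by nlinarith [le_abs_self r]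
      _ ≤ η / (4 * (|r| + 1)) * (|r| + 1) := by gcongr
      _ = η / 4 := by field_simp
  refine ⟨α, hα, by linarith, α * η, by positivity, fun q hq ↦ ?_⟩
  rcases le_sup_iff.1 (hηle q hq) with h | h
  · nlinarith [hB0 q hq]
  · nlinarith [hA0 q hq]

section Gap

variable {X Y : Type*} [Fintype X] [Fintype Y] {π : X × Y → ℝ}

lemma isCompact_QClass (π : X × Y → ℝ) : IsCompact (QClass π) := by
  have hclosed : IsClosed {Q : X × Y × Fin (Fintype.card X * Fintype.card Y) → ℝ |
      ∀ x y, 0 < margXY Q x y → 0 < π (x, y)} := by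
    simp only [Set.ofPred_forall]
    refine isClosed_iInter fun x ↦ isClosed_iInter fun y ↦ ?_
    by_cases hp : 0 < π (x, y)
    · simp [hp]
    · simpa [hp, margXY] using isClosed_le
        (continuous_finsetSum _ fun u _ ↦ continuous_apply (x, y, u)) continuous_const
  exact (isCompact_stdSimplex ℝ _).inter_right hclosed

lemma exists_add_le_sum_mul_omegaFn (hπ : IsPMF π) {R : ℝ} (hR : R < CWyner π) :
    ∃ α, 0 < α ∧ α ≤ 1 ∧ ∃ ε > 0, ∀ Q ∈ QClass π, α * R + ε ≤ ∑ z, Q z * omegaFn π α Q z := by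
  obtain ⟨α, hα0, hα1, ε, hε, h⟩ := (isCompact_QClass π).exists_add_le_convexComb
    ((continuous_klDivXY π).continuousOn.add (continuousOn_condMutualInfo.mono fun Q hQ ↦ hQ.1.1))
    (continuousOn_klDivU π)
    (fun Q hQ ↦ add_nonneg (klDivXY_nonneg hQ.1 hπ hQ.2) (condMutualInfo_nonneg hQ.1.1))
    (fun Q hQ ↦ klDivU_nonneg hQ.1 hπ hQ.2) fun Q hQ hA ↦ hR.trans_le (CWyner_le_klDivU hπ hQ hA)
  exact ⟨α, hα0, hα1, ε, hε, fun Q hQ ↦ (sum_mul_omegaFn π α Q).symm ▸ h Q hQ⟩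

end Gap

lemma exp_sub_one_sub_le_sq_mul_exp_abs (y : ℝ) : exp y - 1 - y ≤ y ^ 2 * exp |y| := by
  rcases le_or_gt |y| 1 with hy | hy
  · calc exp y - 1 - y ≤ |exp y - 1 - y| := le_abs_self _
      _ ≤ y ^ 2 := Real.abs_exp_sub_one_sub_id_le hy
      _ ≤ y ^ 2 * exp |y| := le_mul_of_one_le_right (sq_nonneg y) (Real.one_le_exp (abs_nonneg y))
  · have hsq : |y| ≤ y ^ 2 := by nlinarith [sq_abs y]
    have hexp : exp y ≤ exp |y| := Real.exp_le_exp.2 (le_abs_self y)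
    nlinarith [Real.one_le_exp (abs_nonneg y), neg_abs_le y]

lemma sq_mul_exp_le (y : ℝ) : y ^ 2 * exp (|y| / 6) ≤ 72 * exp (|y| / 3) := by
  have hquad := Real.quadratic_le_exp_of_nonneg (by positivity : 0 ≤ |y| / 6)
  have hexp : exp (|y| / 3) = exp (|y| / 6) * exp (|y| / 6) := by rw [← Real.exp_add]; ring_nf
  rw [hexp]
  nlinarith [sq_abs y, Real.exp_pos (|y| / 6), abs_nonneg y]

section CumulantBounds

variable {X Y U : Type*} [Fintype X] [Fintype Y] [Fintype U] {π : X × Y → ℝ}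
  {Q : X × Y × U → ℝ} {α θ : ℝ}

lemma abs_omegaFn_le (hπ : IsPMF π) (hQ : IsPMF Q)
    (hsupp : ∀ x y, 0 < margXY Q x y → 0 < π (x, y)) (hα0 : 0 ≤ α) (hα1 : α ≤ 1)
    {z : X × Y × U} (hz : 0 < Q z) :
    |omegaFn π α Q z| ≤ -log (π (z.1, z.2.1)) - 3 * log (Q z) := by
  obtain ⟨x, y, u⟩ := z
  obtain ⟨hxy, hxu, hyu, hu⟩ := margs_pos_of_pos hQ.1 hz
  have hπxy := hsupp x y hxy
  have hexpand : omegaFn π α Q (x, y, u) =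
      (1 - α) * ((log (margXY Q x y) - log (π (x, y))) + (log (Q (x, y, u)) + log (margU Q u)
        - log (margXU Q x u) - log (margYU Q y u)))
      + α * (log (Q (x, y, u)) - log (margU Q u) - log (π (x, y))) := by
    rw [omegaFn, Real.log_div hxy.ne' hπxy.ne', Real.log_div (by positivity) (by positivity),
      Real.log_mul hz.ne' hu.ne', Real.log_mul hxu.ne' hyu.ne',
      Real.log_div hz.ne' (by positivity), Real.log_mul hu.ne' hπxy.ne']
    ring
  have hxy_le : log (Q (x, y, u)) ≤ log (margXY Q x y) := Real.log_le_log hz (le_margXY hQ.1 x y u)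
  have hxy1 : log (margXY Q x y) ≤ 0 := Real.log_nonpos hxy.le (hQ.margXY.le_one (x, y))
  have hxu_le : log (Q (x, y, u)) ≤ log (margXU Q x u) := Real.log_le_log hz (le_margXU hQ.1 x y u)
  have hyu_le : log (Q (x, y, u)) ≤ log (margYU Q y u) := Real.log_le_log hz (le_margYU hQ.1 x y u)
  have hxu_u : log (margXU Q x u) ≤ log (margU Q u) :=
    Real.log_le_log hxu (margXU_le_margU hQ.1 x u)
  have hyu_u : log (margYU Q y u) ≤ log (margU Q u) :=
    Real.log_le_log hyu (margYU_le_margU hQ.1 y u)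
  have hu1 : log (margU Q u) ≤ 0 := Real.log_nonpos hu.le (hQ.margU.le_one u)
  have hπ1 : log (π (x, y)) ≤ 0 := Real.log_nonpos hπxy.le (hπ.le_one (x, y))
  rw [hexpand, abs_le]
  constructor <;> nlinarith [mul_nonneg hα0 (sub_nonneg.2 hα1)]

lemma mul_exp_neg_omegaFn_le (hπ : IsPMF π) (hQ : IsPMF Q)
    (hsupp : ∀ x y, 0 < margXY Q x y → 0 < π (x, y)) (hα0 : 0 ≤ α) (hα1 : α ≤ 1)
    (hθ0 : 0 ≤ θ) (hθ : θ ≤ 1 / 6) {z : X × Y × U} (hz : 0 < Q z) :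
    Q z * exp (-(θ * omegaFn π α Q z)) ≤
      Q z - θ * (Q z * omegaFn π α Q z) + θ ^ 2 * (72 * exp (-log (π (z.1, z.2.1)) / 3)) := by
  set w := omegaFn π α Q z
  have hw := abs_omegaFn_le hπ hQ hsupp hα0 hα1 hz
  have htaylor : exp (-(θ * w)) ≤ 1 - θ * w + θ ^ 2 * (w ^ 2 * exp (θ * |w|)) := by
    have := exp_sub_one_sub_le_sq_mul_exp_abs (-(θ * w))
    rw [abs_neg, abs_mul, abs_of_nonneg hθ0] at this
    linarith
  have hrem : Q z * (w ^ 2 * exp (θ * |w|)) ≤ 72 * exp (-log (π (z.1, z.2.1)) / 3) :=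
    calc Q z * (w ^ 2 * exp (θ * |w|)) ≤ Q z * (w ^ 2 * exp (|w| / 6)) := by
          gcongr
          nlinarith [abs_nonneg w]
      _ ≤ Q z * (72 * exp (|w| / 3)) := mul_le_mul_of_nonneg_left (sq_mul_exp_le w) hz.le
      _ ≤ Q z * (72 * exp (-log (π (z.1, z.2.1)) / 3 - log (Q z))) := by gcongr; linarith
      _ = 72 * exp (-log (π (z.1, z.2.1)) / 3) := by
          rw [Real.exp_sub, Real.exp_log hz]
          field_simp
  calc Q z * exp (-(θ * w)) ≤ Q z * (1 - θ * w + θ ^ 2 * (w ^ 2 * exp (θ * |w|))) := by gcongr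
    _ = Q z - θ * (Q z * w) + θ ^ 2 * (Q z * (w ^ 2 * exp (θ * |w|))) := by ring
    _ ≤ _ := by gcongr

lemma OmegaQ_le (hQ : IsPMF Q) : OmegaQ π α θ Q ≤ θ * ∑ z, Q z * omegaFn π α Q z := by
  have hJensen := convexOn_exp.map_sum_le (t := univ.filter fun z ↦ 0 < Q z) (w := Q)
    (p := fun z ↦ -(θ * omegaFn π α Q z)) (fun z _ ↦ hQ.1 z)
    hQ.sum_filter_pos (fun _ _ ↦ Set.mem_univ _)
  simp only [smul_eq_mul, sum_filter_pos_mul hQ.1] at hJensen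
  have hE : ∑ z, Q z * -(θ * omegaFn π α Q z) = -(θ * ∑ z, Q z * omegaFn π α Q z) := by
    rw [mul_sum, ← sum_neg_distrib]
    exact sum_congr rfl fun _ _ ↦ by ring
  rw [hE] at hJensen
  have := (Real.le_log_iff_exp_le ((Real.exp_pos _).trans_le hJensen)).2 hJensen
  rw [OmegaQ, sum_filter_pos_mul hQ.1]
  linarith

lemma le_OmegaQ (hπ : IsPMF π) (hQ : IsPMF Q)
    (hsupp : ∀ x y, 0 < margXY Q x y → 0 < π (x, y)) (hα0 : 0 ≤ α) (hα1 : α ≤ 1)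
    (hθ0 : 0 ≤ θ) (hθ : θ ≤ 1 / 6) :
    θ * ∑ z, Q z * omegaFn π α Q z
      - θ ^ 2 * ∑ z : X × Y × U, 72 * exp (-log (π (z.1, z.2.1)) / 3) ≤ OmegaQ π α θ Q := by
  set S := ∑ z ∈ univ.filter (fun z ↦ 0 < Q z), Q z * exp (-(θ * omegaFn π α Q z))
  have hS : S ≤ 1 - θ * ∑ z, Q z * omegaFn π α Q z
      + θ ^ 2 * ∑ z : X × Y × U, 72 * exp (-log (π (z.1, z.2.1)) / 3) := by
    calc S ≤ ∑ z ∈ univ.filter (fun z ↦ 0 < Q z), (Q z - θ * (Q z * omegaFn π α Q z)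
          + θ ^ 2 * (72 * exp (-log (π (z.1, z.2.1)) / 3))) :=
          sum_le_sum fun z hz ↦ mul_exp_neg_omegaFn_le hπ hQ hsupp hα0 hα1 hθ0 hθ
            (mem_filter.1 hz).2
      _ = 1 - θ * ∑ z, Q z * omegaFn π α Q z
          + θ ^ 2 * ∑ z ∈ univ.filter (fun z ↦ 0 < Q z), 72 * exp (-log (π (z.1, z.2.1)) / 3) := by
          rw [sum_add_distrib, sum_sub_distrib, ← mul_sum, ← mul_sum, hQ.sum_filter_pos,
            sum_filter_pos_mul hQ.1]
      _ ≤ _ := by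
          gcongr _ + _ * ?_
          exact sum_le_sum_of_subset_of_nonneg (filter_subset _ _) fun _ _ _ ↦ by positivity
  have hSpos : 0 < S := by
    obtain ⟨z, hz⟩ := hQ.exists_pos
    exact sum_pos (fun z hz ↦ mul_pos (mem_filter.1 hz).2 (Real.exp_pos _))
      ⟨z, mem_filter.2 ⟨mem_univ z, hz⟩⟩
  rw [OmegaQ]
  linarith [Real.log_le_sub_one_of_pos hSpos]

end CumulantBounds

section Exponent

variable {X Y : Type*} [Fintype X] [Fintype Y] {π : X × Y → ℝ} {α θ : ℝ}

lemma QClass_nonempty (hπ : IsPMF π) : (QClass π).Nonempty := by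
  set N := Fintype.card X * Fintype.card Y
  have hN : (0 : ℝ) < N := by
    obtain ⟨p, -⟩ := hπ.exists_pos
    exact_mod_cast Fintype.card_prod X Y ▸ Fintype.card_pos_iff.2 ⟨p⟩
  set Q₀ : X × Y × Fin N → ℝ := fun z ↦ π (z.1, z.2.1) / N
  have hmarg : ∀ x y, margXY Q₀ x y = π (x, y) := fun x y ↦ by
    simp only [margXY, Q₀, sum_const, card_univ, Fintype.card_fin, nsmul_eq_mul]
    field_simp
  refine ⟨Q₀, ⟨fun z ↦ div_nonneg (hπ.1 _) hN.le, ?_⟩, fun x y h ↦ hmarg x y ▸ h⟩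
  rw [← sum_margXY]
  simp only [hmarg]
  rw [← Fintype.sum_prod_type]
  exact hπ.2

lemma le_OmegaMin (hπ : IsPMF π) {b : ℝ} (h : ∀ Q ∈ QClass π, b ≤ OmegaQ π α θ Q) :
    b ≤ OmegaMin π α θ := by
  obtain ⟨Q, hQ⟩ := QClass_nonempty hπ
  exact le_csInf ⟨_, Q, hQ, rfl⟩ fun _ ⟨Q, hQ, hr⟩ ↦ hr ▸ h Q hQ

lemma OmegaMin_le {Q : X × Y × Fin (Fintype.card X * Fintype.card Y) → ℝ} (hQ : Q ∈ QClass π)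
    {b : ℝ} (hb : 0 ≤ b) (h : OmegaQ π α θ Q ≤ b) : OmegaMin π α θ ≤ b := by
  by_cases hbdd : BddBelow {r | ∃ Q ∈ QClass π, r = OmegaQ π α θ Q}
  · exact (csInf_le hbdd ⟨Q, hQ, rfl⟩).trans h
  · rw [OmegaMin, Real.sInf_of_not_bddBelow hbdd]
    exact hb

lemma bddAbove_Fat (hπ : IsPMF π) (R : ℝ) :
    BddAbove {r | ∃ α ∈ Set.Icc (0 : ℝ) 1, ∃ θ ∈ Set.Ici (0 : ℝ), r = Fat π α θ R} := by
  obtain ⟨Q, hQ⟩ := QClass_nonempty hπ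
  have hXY := klDivXY_nonneg hQ.1 hπ hQ.2
  have hCMI := condMutualInfo_nonneg hQ.1.1
  have hU := klDivU_nonneg hQ.1 hπ hQ.2
  set K := klDivXY π Q + condMutualInfo Q + klDivU π Q
  refine ⟨(K + |R|) / 2, ?_⟩
  rintro r ⟨α, ⟨hα0, hα1⟩, θ, (hθ0 : 0 ≤ θ), rfl⟩
  have hΩ : OmegaMin π α θ ≤ θ * K := OmegaMin_le hQ (by positivity) <|
    (OmegaQ_le hQ.1).trans <| by
      rw [sum_mul_omegaFn]
      nlinarith [mul_nonneg hθ0 hα0, mul_nonneg hθ0 (sub_nonneg.2 hα1)]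
  have hαR : -(α * R) ≤ |R| := by
    nlinarith [mul_le_mul_of_nonneg_left (neg_le_abs R) hα0,
      mul_le_mul_of_nonneg_right hα1 (abs_nonneg R)]
  have hKR : 0 ≤ K + |R| := by positivity
  rw [Fat, div_le_iff₀ (by nlinarith)]
  nlinarith [mul_le_mul_of_nonneg_left hαR hθ0, mul_nonneg hKR (mul_nonneg (sub_nonneg.2 hα1) hθ0)]

end Exponent

/-- Positivity of the strong converse exponent: if `R < C_Wyner(X;Y)` then `F(R) > 0`. -/
theorem strong_converse_exponent_positive
    {X Y : Type*} [Fintype X] [Fintype Y] (π : X × Y → ℝ) (hπ : IsPMF π)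
    (R : ℝ) (hR : R < CWyner π) :
    0 < Fexp π R := by
  obtain ⟨α, hα0, hα1, ε, hε, hgap⟩ := exists_add_le_sum_mul_omegaFn hπ hR
  set M := ∑ z : X × Y × Fin (Fintype.card X * Fintype.card Y),
    72 * exp (-log (π (z.1, z.2.1)) / 3)
  have hM : 0 ≤ M := by positivity
  obtain ⟨θ, hθ0, hθ6, hθM⟩ : ∃ θ : ℝ, 0 < θ ∧ θ ≤ 1 / 6 ∧ θ * M < ε := by
    refine ⟨min (1 / 6) (ε / (M + 1)), by positivity, min_le_left _ _, ?_⟩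
    calc min (1 / 6) (ε / (M + 1)) * M ≤ ε / (M + 1) * M := by gcongr; exact min_le_right _ _
      _ < ε := by rw [div_mul_eq_mul_div, div_lt_iff₀ (by positivity)]; nlinarith
  have hΩ : θ * (α * R + ε) - θ ^ 2 * M ≤ OmegaMin π α θ := le_OmegaMin hπ fun Q hQ ↦
    le_trans (by nlinarith [hgap Q hQ]) (le_OmegaQ hπ hQ.1 hQ.2 hα0.le hα1 hθ0.le hθ6)
  have hF : 0 < Fat π α θ R := div_pos (by nlinarith) (by nlinarith)
  exact hF.trans_le (le_csSup (bddAbove_Fat hπ R) ⟨α, ⟨hα0.le, hα1⟩, θ, hθ0.le, rfl⟩)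
end
end

section
/- One-shot achievability bound for source synthesis: let s ∈ (0,1]. Then E_U[ exp(s D_{1+s}(P_{X|U} ‖ π_X)) ] ≤ exp(s D_{1+s}(P_{X|W} ‖ π_X | P_W)) / |ℳ|^s + exp(s D_{1+s}(P_X ‖ π_X)), i.e., e^{s D_{1+s}(P_{X|U}‖π_X|P_U)} ≤ e^{s D_{1+s}(P_{X|W}‖π_X|P_W) − sR} + e^{s D_{1+s}(P_X‖π_X)} when |ℳ| = e^R. -/
open Finset

theorem sum_mul_rpow_le_of_nonneg {κ : Type*} (t : Finset κ) {w x : κ → ℝ}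
    (hw : ∀ i, 0 ≤ w i) (hx : ∀ i, 0 ≤ x i) {s : ℝ} (hs0 : 0 < s) (hs1 : s ≤ 1) :
    ∑ i ∈ t, w i * x i ^ s ≤ (∑ i ∈ t, w i) ^ (1 - s) * (∑ i ∈ t, w i * x i) ^ s := by
  have := Real.inner_le_weight_mul_Lp_of_nonneg t ((one_le_inv₀ hs0).2 hs1) w (fun i => x i ^ s)
    hw fun i => Real.rpow_nonneg (hx i) s
  simpa only [inv_inv, ← Real.rpow_mul (hx _), mul_inv_cancel₀ hs0.ne', Real.rpow_one] using this

theorem rpow_one_add_sum_le {ι : Type*} [Fintype ι] [DecidableEq ι] {a : ι → ℝ}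
    (ha : ∀ i, 0 ≤ a i) {s : ℝ} (hs0 : 0 ≤ s) (hs1 : s ≤ 1) :
    (∑ i, a i) ^ (1 + s) ≤ ∑ i, (a i ^ (1 + s) + a i * (∑ j ∈ univ.erase i, a j) ^ s) := by
  rw [Real.rpow_one_add' (sum_nonneg fun i _ => ha i) (by linarith), sum_mul]
  gcongr with i
  rw [Real.rpow_one_add' (ha i) (by linarith), ← mul_add]
  refine mul_le_mul_of_nonneg_left ?_ (ha i)
  rw [← add_sum_erase _ _ (mem_univ i)]
  exact Real.rpow_add_le_add_rpow (ha i) (sum_nonneg fun j _ => ha j) hs0 hs1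

/-- `E_U[F]` for a random codebook `U = (W(i))_{i ∈ ι}` of i.i.d. codewords `W(i) ∼ P`. -/
def iidExpect {ι W : Type*} [Fintype ι] [DecidableEq ι] [Fintype W] (P : W → ℝ)
    (F : (ι → W) → ℝ) : ℝ :=
  ∑ f : ι → W, (∏ i, P (f i)) * F f

section iidExpect

variable {ι W : Type*} [Fintype ι] [DecidableEq ι] [Fintype W] {P : W → ℝ} {a : W → ℝ} {s : ℝ}

theorem iidExpect_add (F G : (ι → W) → ℝ) :
    iidExpect P (fun f => F f + G f) = iidExpect P F + iidExpect P G := by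
  simp only [iidExpect, mul_add, sum_add_distrib]

theorem iidExpect_sum {κ : Type*} (t : Finset κ) (F : κ → (ι → W) → ℝ) :
    iidExpect P (fun f => ∑ k ∈ t, F k f) = ∑ k ∈ t, iidExpect P (F k) := by
  simp only [iidExpect, mul_sum]
  exact sum_comm

theorem iidExpect_const_mul (c : ℝ) (F : (ι → W) → ℝ) :
    iidExpect P (fun f => c * F f) = c * iidExpect P F := by
  simp only [iidExpect, mul_sum, mul_left_comm]

theorem iidExpect_mono (hP0 : ∀ w, 0 ≤ P w) {F G : (ι → W) → ℝ} (hFG : ∀ f, F f ≤ G f) :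
    iidExpect P F ≤ iidExpect P G :=
  sum_le_sum fun f _ => mul_le_mul_of_nonneg_left (hFG f) (prod_nonneg fun i _ => hP0 (f i))

theorem iidExpect_prod_eval (hP : ∑ w, P w = 1) (t : Finset ι) (g : ι → W → ℝ) :
    iidExpect P (fun f => ∏ i ∈ t, g i (f i)) = ∏ i ∈ t, ∑ w, P w * g i w := by
  have hmean : ∀ i, ∑ w, P w * (if i ∈ t then g i w else 1) =
      if i ∈ t then ∑ w, P w * g i w else 1 := fun i => by
    split_ifs <;> simp [hP]
  simp only [iidExpect, ← Fintype.prod_ite_mem t, ← prod_mul_distrib, ← hmean]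
  exact (Fintype.prod_sum fun i w => P w * if i ∈ t then g i w else 1).symm

theorem iidExpect_comp_eval (hP : ∑ w, P w = 1) (m : ι) (g : W → ℝ) :
    iidExpect P (fun f => g (f m)) = ∑ w, P w * g w := by
  simpa using iidExpect_prod_eval hP {m} fun _ => g

theorem iidExpect_mul_comp_eval (hP : ∑ w, P w = 1) {m j : ι} (hmj : m ≠ j) (g h : W → ℝ) :
    iidExpect P (fun f => g (f m) * h (f j)) = (∑ w, P w * g w) * ∑ w, P w * h w := by
  have := iidExpect_prod_eval hP {m, j} fun i => if i = m then g else h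
  simpa [prod_pair hmj, hmj.symm] using this

theorem iidExpect_mul_rpow_sum_erase_le (hP0 : ∀ w, 0 ≤ P w) (hP : ∑ w, P w = 1)
    (ha : ∀ w, 0 ≤ a w) (hs0 : 0 < s) (hs1 : s ≤ 1) (m : ι) :
    iidExpect P (fun f => a (f m) * (∑ j ∈ univ.erase m, a (f j)) ^ s)
      ≤ (Fintype.card ι : ℝ) ^ s * (∑ w, P w * a w) ^ (1 + s) := by
  set μ := ∑ w, P w * a w
  have hμ : 0 ≤ μ := sum_nonneg fun w _ => mul_nonneg (hP0 w) (ha w)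
  set c : ℝ := ((#(univ.erase m) : ℕ) : ℝ)
  have hc : c ≤ Fintype.card ι := Nat.cast_le.2 (card_erase_le.trans_eq card_univ)
  have hweight : iidExpect P (fun f => a (f m)) = μ := iidExpect_comp_eval hP m a
  have hmean : iidExpect P (fun f => a (f m) * ∑ j ∈ univ.erase m, a (f j)) = c * (μ * μ) := by
    simp only [mul_sum]
    rw [iidExpect_sum, sum_congr rfl fun j hj =>
      iidExpect_mul_comp_eval hP (ne_of_mem_erase hj).symm a a, sum_const, nsmul_eq_mul]
  calc iidExpect P (fun f : ι → W => a (f m) * (∑ j ∈ univ.erase m, a (f j)) ^ s)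
      = ∑ f : ι → W, (∏ i, P (f i)) * a (f m) * (∑ j ∈ univ.erase m, a (f j)) ^ s := by
        simp only [iidExpect, mul_assoc]
    _ ≤ μ ^ (1 - s) * (c * (μ * μ)) ^ s := by
        rw [← hmean, ← hweight]
        simp only [iidExpect, ← mul_assoc]
        exact sum_mul_rpow_le_of_nonneg _
          (fun f : ι → W => mul_nonneg (prod_nonneg fun i _ => hP0 (f i)) (ha (f m)))
          (fun f : ι → W => sum_nonneg fun j _ => ha (f j)) hs0 hs1
    _ = c ^ s * μ ^ (1 + s) := by
        have hμpow : μ ^ (1 - s) * μ ^ s = μ := by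
          rw [← Real.rpow_add' hμ (by norm_num), sub_add_cancel, Real.rpow_one]
        rw [Real.mul_rpow (by positivity) (by positivity), Real.mul_rpow hμ hμ,
          Real.rpow_one_add' hμ (by linarith)]
        linear_combination (c ^ s * μ ^ s) * hμpow
    _ ≤ (Fintype.card ι : ℝ) ^ s * μ ^ (1 + s) := by gcongr

theorem iidExpect_mean_rpow_le [Nonempty ι] (hP0 : ∀ w, 0 ≤ P w) (hP : ∑ w, P w = 1)
    (ha : ∀ w, 0 ≤ a w) (hs0 : 0 < s) (hs1 : s ≤ 1) :
    iidExpect P (fun f : ι → W => ((Fintype.card ι : ℝ)⁻¹ * ∑ i, a (f i)) ^ (1 + s))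
      ≤ (∑ w, P w * a w ^ (1 + s)) / (Fintype.card ι : ℝ) ^ s
        + (∑ w, P w * a w) ^ (1 + s) := by
  set N : ℝ := (Fintype.card ι : ℝ) with hN_def
  have hN : 0 < N := by positivity
  have hscale : ∀ f : ι → W, (N⁻¹ * ∑ i, a (f i)) ^ (1 + s)
      = (N ^ (1 + s))⁻¹ * (∑ i, a (f i)) ^ (1 + s) := fun f => by
    rw [Real.mul_rpow (by positivity) (sum_nonneg fun i _ => ha (f i)), Real.inv_rpow hN.le]
  calc iidExpect P (fun f : ι → W => (N⁻¹ * ∑ i, a (f i)) ^ (1 + s))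
      = (N ^ (1 + s))⁻¹ * iidExpect P (fun f => (∑ i, a (f i)) ^ (1 + s)) := by
        simp only [hscale]
        exact iidExpect_const_mul _ _
    _ ≤ (N ^ (1 + s))⁻¹ * ∑ m : ι, iidExpect P (fun f : ι → W =>
          a (f m) ^ (1 + s) + a (f m) * (∑ j ∈ univ.erase m, a (f j)) ^ s) := by
        rw [← iidExpect_sum]
        gcongr
        exact iidExpect_mono hP0 fun f => rpow_one_add_sum_le (fun i => ha (f i)) hs0.le hs1
    _ ≤ (N ^ (1 + s))⁻¹ * ∑ _m : ι,
          ((∑ w, P w * a w ^ (1 + s)) + N ^ s * (∑ w, P w * a w) ^ (1 + s)) := by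
        gcongr with m
        rw [iidExpect_add, iidExpect_comp_eval hP m fun w => a w ^ (1 + s)]
        gcongr
        exact iidExpect_mul_rpow_sum_erase_le hP0 hP ha hs0 hs1 m
    _ = (∑ w, P w * a w ^ (1 + s)) / N ^ s + (∑ w, P w * a w) ^ (1 + s) := by
        rw [sum_const, card_univ, nsmul_eq_mul, ← hN_def, Real.rpow_one_add' hN.le (by linarith)]
        field_simp

end iidExpect

/-- One-shot achievability bound for source synthesis (Lemma 5 / one-shot bound of Yu–Tan):
for `s ∈ (0,1]`, the expectation over a random codebook `U = (W(1),…,W(M))` of i.i.d.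
codewords `W(m) ∼ P_W` of `exp(s D_{1+s}(P_{X|U} ‖ π_X))` is at most
`exp(s D_{1+s}(P_{X|W} ‖ π_X | P_W)) / M^s + exp(s D_{1+s}(P_X ‖ π_X))`, where
`P_{X|U}(x) = M⁻¹ ∑_m P_{X|W}(x|W(m))` and `P_X` is the marginal of `P_W × P_{X|W}`.
All the exponentiated Rényi divergences are written out explicitly. -/
theorem one_shot_achievability_bound
    {W X : Type*} [Fintype W] [Fintype X]
    (PW : W → ℝ) (hPW : IsPMF PW)
    (PXW : W → X → ℝ) (hPXW : ∀ w, IsPMF (PXW w))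
    (πX : X → ℝ) (hπX : IsPMF πX)
    (M : ℕ) (hM : 0 < M) (s : ℝ) (hs : s ∈ Set.Ioc (0 : ℝ) 1) :
    (∑ f : Fin M → W, (∏ m, PW (f m)) *
        ∑ x, ((M : ℝ)⁻¹ * ∑ m, PXW (f m) x) ^ (1 + s) * πX x ^ (-s))
      ≤ (∑ w, ∑ x, PW w * PXW w x ^ (1 + s) * πX x ^ (-s)) / (M : ℝ) ^ s
        + ∑ x, (∑ w, PW w * PXW w x) ^ (1 + s) * πX x ^ (-s) := by
  have : Nonempty (Fin M) := ⟨⟨0, hM⟩⟩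
  have hx : ∀ x, iidExpect PW (fun f : Fin M → W => ((M : ℝ)⁻¹ * ∑ m, PXW (f m) x) ^ (1 + s))
      ≤ (∑ w, PW w * PXW w x ^ (1 + s)) / (M : ℝ) ^ s + (∑ w, PW w * PXW w x) ^ (1 + s) :=
    fun x => by
      simpa using iidExpect_mean_rpow_le (ι := Fin M) hPW.1 hPW.2 (fun w => (hPXW w).1 x) hs.1 hs.2
  calc (∑ f : Fin M → W, (∏ m, PW (f m)) *
        ∑ x, ((M : ℝ)⁻¹ * ∑ m, PXW (f m) x) ^ (1 + s) * πX x ^ (-s))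
      = ∑ x, iidExpect PW (fun f : Fin M → W => ((M : ℝ)⁻¹ * ∑ m, PXW (f m) x) ^ (1 + s))
          * πX x ^ (-s) := by
        simp only [iidExpect, mul_sum, sum_mul, mul_assoc]
        exact sum_comm
    _ ≤ ∑ x, ((∑ w, PW w * PXW w x ^ (1 + s)) / (M : ℝ) ^ s
          + (∑ w, PW w * PXW w x) ^ (1 + s)) * πX x ^ (-s) :=
        sum_le_sum fun x _ => mul_le_mul_of_nonneg_right (hx x) (Real.rpow_nonneg (hπX.1 x) _)
    _ = (∑ w, ∑ x, PW w * PXW w x ^ (1 + s) * πX x ^ (-s)) / (M : ℝ) ^ s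
        + ∑ x, (∑ w, PW w * PXW w x) ^ (1 + s) * πX x ^ (-s) := by
        simp only [add_mul, sum_add_distrib, div_mul_eq_mul_div, ← sum_div, sum_mul]
        rw [sum_comm]
end
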